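/- arXiv:1105.3251 — 6 statements merged into one kernel-verified Lean document; each statement's English description precedes it below -/
import Mathlib

section
/- Let φ : ℝ → [0,∞) be convex with φ(0) = 0 and φ(-t) + φ(t) > 0 for all t ≠ 0. If α, β > 0 and a, b ∈ ℝ satisfy a·b < 0, then α·φ(a/α) + β·φ(b/β) > (α+β)·φ((a+b)/(α+β)). -/
/-!
Since `φ 0 = 0`, convexity says that the slope `φ u / u` of the chord from `0` to `u` is monotone
in `u ≠ 0`, and the hypothesis `φ (-t) + φ t > 0` makes it jump strictly across `0`. Hence for
`x < 0 < y` the chord of `φ` over `[x, y]` lies strictly above the graph at every interior point,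
which is the claim with `x = a / α`, `y = b / β`.
-/

open Set

namespace ConvexOn

variable {φ : ℝ → ℝ}

theorem div_self_mono (hconv : ConvexOn ℝ univ φ) (h0 : φ 0 = 0) {x y : ℝ}
    (hx : x ≠ 0) (hy : y ≠ 0) (hxy : x ≤ y) : φ x / x ≤ φ y / y := by
  simpa [h0] using hconv.secant_mono (mem_univ 0) (mem_univ x) (mem_univ y) hx hy hxy

theorem div_self_lt_of_neg_of_pos (hconv : ConvexOn ℝ univ φ) (h0 : φ 0 = 0)
    (hpos : ∀ t : ℝ, t ≠ 0 → 0 < φ (-t) + φ t) {x y : ℝ} (hx : x < 0) (hy : 0 < y) :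
    φ x / x < φ y / y := by
  set t := min (-x) y
  have ht : 0 < t := lt_min (neg_pos.2 hx) hy
  have hjump : φ (-t) / -t < φ t / t := by
    rw [div_neg, neg_lt_iff_pos_add', ← add_div]
    exact div_pos (hpos t ht.ne') ht
  calc φ x / x ≤ φ (-t) / -t :=
        hconv.div_self_mono h0 hx.ne (neg_ne_zero.2 ht.ne') (le_neg.1 (min_le_left _ _))
    _ < φ t / t := hjump
    _ ≤ φ y / y := hconv.div_self_mono h0 ht.ne' hy.ne' (min_le_right _ _)

theorem map_le_mul_div_self_of_nonneg (hconv : ConvexOn ℝ univ φ) (h0 : φ 0 = 0) {z y : ℝ}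
    (hz : 0 ≤ z) (hzy : z ≤ y) : φ z ≤ z * (φ y / y) := by
  rcases hz.eq_or_lt with rfl | hz
  · simp [h0]
  have h := hconv.div_self_mono h0 hz.ne' (hz.trans_le hzy).ne' hzy
  rwa [div_le_iff₀' hz] at h

theorem map_le_mul_div_self_of_nonpos (hconv : ConvexOn ℝ univ φ) (h0 : φ 0 = 0) {x z : ℝ}
    (hxz : x ≤ z) (hz : z ≤ 0) : φ z ≤ z * (φ x / x) := by
  rcases hz.eq_or_lt with rfl | hz
  · simp [h0]
  have h := hconv.div_self_mono h0 (hxz.trans_lt hz).ne hz.ne hxz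
  rwa [le_div_iff_of_neg' hz] at h

theorem weighted_map_lt_of_neg_of_pos (hconv : ConvexOn ℝ univ φ) (h0 : φ 0 = 0)
    (hpos : ∀ t : ℝ, t ≠ 0 → 0 < φ (-t) + φ t) {α β x y : ℝ} (hα : 0 < α) (hβ : 0 < β)
    (hx : x < 0) (hy : 0 < y) :
    (α + β) * φ ((α * x + β * y) / (α + β)) < α * φ x + β * φ y := by
  set z := (α * x + β * y) / (α + β)
  have hαβ : 0 < α + β := add_pos hα hβ
  have hz : (α + β) * z = α * x + β * y := mul_div_cancel₀ _ hαβ.ne'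
  have hslope := hconv.div_self_lt_of_neg_of_pos h0 hpos hx hy
  have hφx : x * (φ x / x) = φ x := mul_div_cancel₀ _ hx.ne
  have hφy : y * (φ y / y) = φ y := mul_div_cancel₀ _ hy.ne'
  rcases le_total 0 z with hz0 | hz0
  · have hzy : z ≤ y := by nlinarith
    have hle := hconv.map_le_mul_div_self_of_nonneg h0 hz0 hzy
    have hax : α * x < 0 := mul_neg_of_pos_of_neg hα hx
    calc (α + β) * φ z ≤ (α + β) * (z * (φ y / y)) := by gcongr
      _ = α * x * (φ y / y) + β * φ y := by linear_combination (φ y / y) * hz + β * hφy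
      _ < α * x * (φ x / x) + β * φ y := by gcongr ?_ + _; exact mul_lt_mul_of_neg_left hslope hax
      _ = α * φ x + β * φ y := by rw [mul_assoc, hφx]
  · have hxz : x ≤ z := by nlinarith
    have hle := hconv.map_le_mul_div_self_of_nonpos h0 hxz hz0
    have hby : 0 < β * y := mul_pos hβ hy
    calc (α + β) * φ z ≤ (α + β) * (z * (φ x / x)) := by gcongr
      _ = α * φ x + β * y * (φ x / x) := by linear_combination (φ x / x) * hz + α * hφx
      _ < α * φ x + β * y * (φ y / y) := by gcongr
      _ = α * φ x + β * φ y := by rw [mul_assoc, hφy]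

end ConvexOn

theorem stmt_2_general (φ : ℝ → ℝ) (hconv : ConvexOn ℝ Set.univ φ)
    (h0 : φ 0 = 0)
    (hpos : ∀ t : ℝ, t ≠ 0 → 0 < φ (-t) + φ t)
    (α β : ℝ) (hα : 0 < α) (hβ : 0 < β) (a b : ℝ) (hab : a * b < 0) :
    (α + β) * φ ((a + b) / (α + β)) < α * φ (a / α) + β * φ (b / β) := by
  have hα' : α * (a / α) = a := mul_div_cancel₀ a hα.ne'
  have hβ' : β * (b / β) = b := mul_div_cancel₀ b hβ.ne'
  rcases mul_neg_iff.mp hab with ⟨ha, hb⟩ | ⟨ha, hb⟩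
  · have h := hconv.weighted_map_lt_of_neg_of_pos h0 hpos hβ hα
      (div_neg_of_neg_of_pos hb hβ) (div_pos ha hα)
    rwa [hα', hβ', add_comm β, add_comm b, add_comm (β * _)] at h
  · have h := hconv.weighted_map_lt_of_neg_of_pos h0 hpos hα hβ
      (div_neg_of_neg_of_pos ha hα) (div_pos hb hβ)
    rwa [hα', hβ'] at h

theorem stmt_2 (φ : ℝ → ℝ) (hconv : ConvexOn ℝ Set.univ φ)
    (hnonneg : ∀ t, 0 ≤ φ t) (h0 : φ 0 = 0)
    (hpos : ∀ t : ℝ, t ≠ 0 → 0 < φ (-t) + φ t)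
    (α β : ℝ) (hα : 0 < α) (hβ : 0 < β) (a b : ℝ) (hab : a * b < 0) :
    (α + β) * φ ((a + b) / (α + β)) < α * φ (a / α) + β * φ (b / β) :=
  stmt_2_general φ hconv h0 hpos α β hα hβ a b hab
end

section
/- Let φ : ℝ → [0,∞) be convex with φ(0) = 0 and φ(-t)+φ(t) > 0 for t ≠ 0. If α, β, ω > 0 and a, b ∈ ℝ with a·b < 0, |a|/α ≥ ω and |b|/β ≥ ω, then α·φ(a/α) + β·φ(b/β) − (α+β)·φ((a+b)/(α+β)) ≥ (min{|a|,|b|}/ω)·(φ(−ω) + φ(ω)). -/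
/-!
A convex `φ` with `φ 0 = 0` is star-shaped from the origin: `φ (μ x) ≤ μ φ x` for `μ ∈ [0, 1]`.
Say `a > 0 > b` and `a + b ≥ 0`, so that `min |a| |b| = -b`. Split `α φ(a/α)` into the parts of
weight `(a + b)/a` and `-b/a`. Star-shapedness bounds the first part below by
`(α + β) φ((a + b)/(α + β))`, the second by `(-b/ω) φ ω` (as `ωα ≤ a`), and `β φ(b/β)` by
`(-b/ω) φ(-ω)` (as `ωβ ≤ -b`). The remaining sign patterns follow by swapping `(a, α)` with
`(b, β)` and by replacing `φ` with `t ↦ φ (-t)`.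
-/

theorem ConvexOn.map_smul_le_smul_map {𝕜 E β : Type*} [Field 𝕜] [LinearOrder 𝕜]
    [IsStrictOrderedRing 𝕜] [AddCommGroup E] [Module 𝕜 E] [AddCommMonoid β] [PartialOrder β]
    [Module 𝕜 β] {f : E → β} (hf : ConvexOn 𝕜 Set.univ f) (h0 : f 0 = 0) {μ : 𝕜}
    (hμ0 : 0 ≤ μ) (hμ1 : μ ≤ 1) (x : E) : f (μ • x) ≤ μ • f x := by
  simpa [h0] using
    hf.2 (Set.mem_univ x) (Set.mem_univ 0) hμ0 (sub_nonneg.2 hμ1) (add_sub_cancel μ 1)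

theorem ConvexOn.mul_map_mul_le_mul_map_mul {φ : ℝ → ℝ} (hφ : ConvexOn ℝ Set.univ φ)
    (h0 : φ 0 = 0) {s t : ℝ} (hs : 0 ≤ s) (hst : s ≤ t) (y : ℝ) :
    t * φ (s * y) ≤ s * φ (t * y) := by
  rcases hs.trans hst |>.eq_or_lt with rfl | ht
  · simp [le_antisymm hst hs]
  have key := hφ.map_smul_le_smul_map h0 (div_nonneg hs ht.le) ((div_le_one ht).2 hst) (t * y)
  rw [smul_eq_mul, smul_eq_mul, show s / t * (t * y) = s * y by field_simp] at key
  rwa [div_mul_eq_mul_div, le_div_iff₀ ht, mul_comm] at key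

noncomputable def jensenGap (φ : ℝ → ℝ) (α β a b : ℝ) : ℝ :=
  α * φ (a / α) + β * φ (b / β) - (α + β) * φ ((a + b) / (α + β))

theorem jensenGap_comm (φ : ℝ → ℝ) (α β a b : ℝ) :
    jensenGap φ α β a b = jensenGap φ β α b a := by
  unfold jensenGap
  rw [add_comm β, add_comm b]
  ring

theorem jensenGap_comp_neg (φ : ℝ → ℝ) (α β a b : ℝ) :
    jensenGap (fun t => φ (-t)) α β a b = jensenGap φ α β (-a) (-b) := by
  simp only [jensenGap, neg_div, ← neg_add]

theorem ConvexOn.neg_div_mul_le_jensenGap {φ : ℝ → ℝ} (hφ : ConvexOn ℝ Set.univ φ)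
    (h0 : φ 0 = 0) {α β ω a b : ℝ} (hα : 0 < α) (hβ : 0 < β) (hω : 0 < ω)
    (hab : 0 ≤ a + b) (ha : ω * α ≤ a) (hb : ω * β ≤ -b) :
    -b / ω * (φ (-ω) + φ ω) ≤ jensenGap φ α β a b := by
  have ha₀ : 0 < a := (mul_pos hω hα).trans_le ha
  have hb₀ : 0 < -b := (mul_pos hω hβ).trans_le hb
  have hneg : -b * φ (-ω) ≤ ω * β * φ (b / β) := by
    have := hφ.mul_map_mul_le_mul_map_mul h0 (by positivity) hb (-β⁻¹)
    rwa [show ω * β * -β⁻¹ = -ω by field_simp, show -b * -β⁻¹ = b / β by field_simp] at this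
  have hpos : a * φ ω ≤ ω * α * φ (a / α) := by
    have := hφ.mul_map_mul_le_mul_map_mul h0 (by positivity) ha α⁻¹
    rwa [show ω * α * α⁻¹ = ω by field_simp, ← div_eq_mul_inv] at this
  have hmid : a * (α + β) * φ ((a + b) / (α + β)) ≤ α * (a + b) * φ (a / α) := by
    have := hφ.mul_map_mul_le_mul_map_mul h0 (by positivity)
      (show α * (a + b) ≤ a * (α + β) by nlinarith) (α * (α + β))⁻¹
    rwa [show α * (a + b) * (α * (α + β))⁻¹ = (a + b) / (α + β) by field_simp,
      show a * (α + β) * (α * (α + β))⁻¹ = a / α by field_simp] at this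
  rw [jensenGap, div_mul_eq_mul_div, div_le_iff₀ hω, ← mul_le_mul_iff_right₀ ha₀]
  linear_combination a * hneg + (-b) * hpos + ω * hmid

theorem ConvexOn.min_abs_div_mul_le_jensenGap_of_pos_of_neg {φ : ℝ → ℝ}
    (hφ : ConvexOn ℝ Set.univ φ) (h0 : φ 0 = 0) {α β ω a b : ℝ} (hα : 0 < α) (hβ : 0 < β)
    (hω : 0 < ω) (ha₀ : 0 < a) (hb₀ : b < 0) (ha : ω ≤ |a| / α) (hb : ω ≤ |b| / β) :
    min |a| |b| / ω * (φ (-ω) + φ ω) ≤ jensenGap φ α β a b := by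
  rw [abs_of_pos ha₀, le_div_iff₀ hα] at ha
  rw [abs_of_neg hb₀, le_div_iff₀ hβ] at hb
  rw [abs_of_pos ha₀, abs_of_neg hb₀]
  rcases le_total 0 (a + b) with hab | hab
  · rw [min_eq_right (by linarith)]
    exact hφ.neg_div_mul_le_jensenGap h0 hα hβ hω hab ha hb
  · rw [min_eq_left (by linarith)]
    have hψ : ConvexOn ℝ Set.univ (fun t => φ (-t)) := hφ.comp_linearMap (-LinearMap.id)
    have := hψ.neg_div_mul_le_jensenGap (by simpa using h0) hβ hα hω (a := -b) (b := -a)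
      (by linarith) (by linarith) (by linarith)
    rwa [jensenGap_comp_neg, jensenGap_comm, neg_neg, neg_neg, neg_neg, add_comm (φ ω)] at this

theorem stmt_3_general (φ : ℝ → ℝ) (hconv : ConvexOn ℝ Set.univ φ)
    (h0 : φ 0 = 0)
    (α β ω : ℝ) (hα : 0 < α) (hβ : 0 < β) (hω : 0 < ω)
    (a b : ℝ) (hab : a * b < 0) (ha : ω ≤ |a| / α) (hb : ω ≤ |b| / β) :
    (min |a| |b| / ω) * (φ (-ω) + φ ω) ≤
      α * φ (a / α) + β * φ (b / β) - (α + β) * φ ((a + b) / (α + β)) := by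
  rcases mul_neg_iff.mp hab with ⟨ha₀, hb₀⟩ | ⟨ha₀, hb₀⟩
  · exact hconv.min_abs_div_mul_le_jensenGap_of_pos_of_neg h0 hα hβ hω ha₀ hb₀ ha hb
  · have := hconv.min_abs_div_mul_le_jensenGap_of_pos_of_neg h0 hβ hα hω hb₀ ha₀ hb ha
    rwa [min_comm, jensenGap_comm] at this

theorem stmt_3 (φ : ℝ → ℝ) (hconv : ConvexOn ℝ Set.univ φ)
    (hnonneg : ∀ t, 0 ≤ φ t) (h0 : φ 0 = 0)
    (hpos : ∀ t : ℝ, t ≠ 0 → 0 < φ (-t) + φ t)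
    (α β ω : ℝ) (hα : 0 < α) (hβ : 0 < β) (hω : 0 < ω)
    (a b : ℝ) (hab : a * b < 0) (ha : ω ≤ |a| / α) (hb : ω ≤ |b| / β) :
    (min |a| |b| / ω) * (φ (-ω) + φ ω) ≤
      α * φ (a / α) + β * φ (b / β) - (α + β) * φ ((a + b) / (α + β)) :=
  stmt_3_general φ hconv h0 α β ω hα hβ hω a b hab ha hb
end

section
/- Let φ : ℝ → [0,∞) be even, convex, with φ(0)=0, twice continuously differentiable on (0,∞) with φ'' > 0 there. If a, b, α, β, ω > 0 satisfy ω ≤ a/α ≤ ω⁻¹ and ω ≤ b/β ≤ ω⁻¹, then α·φ(a/α) + β·φ(b/β) − (α+β)·φ((a+b)/(α+β)) ≥ (m·min{α²,β²}/(2(α+β)))·(a/α − b/β)², where m = min{φ''(t) : t ∈ [ω, ω⁻¹]}. -/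
/-!
Since `φ'' ≥ m` on `[ω, ω⁻¹]`, the function `φ - m t² / 2` is convex there, i.e. `φ` is
`m`-strongly convex on that interval. The strong-convexity inequality with weights
`α / (α + β)` and `β / (α + β)` at `a / α` and `b / β`, multiplied by `α + β`, bounds the Jensen gap
below by `m αβ / (2(α + β)) · (a/α - b/β)²`, and `αβ ≥ min(α², β²)`.

The hypothesis `φ'' > 0` only speaks about `deriv (deriv φ)`, so differentiability of `φ` must be
recovered: `φ'` is differentiable, hence continuous and strictly increasing, on `(0, ∞)`. At a point
where the continuous function `φ` were not differentiable, `deriv φ` would take the junk value `0`;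
by injectivity `φ` is differentiable at all nearby points, with derivative tending to that value,
so `φ` is differentiable there after all.
-/

open Set Filter Topology

theorem hasDerivAt_of_eventually_hasDerivAt_nhdsNE {E : Type*} [NormedAddCommGroup E]
    [NormedSpace ℝ E] {f g : ℝ → E} {x : ℝ}
    (hdiff : ∀ᶠ y in 𝓝[≠] x, HasDerivAt f (g y) y) (hf : ContinuousAt f x)
    (hg : ContinuousAt g x) : HasDerivAt f (g x) x := by
  set s := {y | HasDerivAt f (g y) y}
  have hs : DifferentiableOn ℝ f s := fun y hy => hy.differentiableAt.differentiableWithinAt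
  have hderiv : ∀ l ≤ 𝓝[≠] x, Tendsto (deriv f) l (𝓝 (g x)) := fun l hl =>
    (hg.tendsto.mono_left (hl.trans nhdsWithin_le_nhds)).congr'
      (Eventually.mono (hl hdiff) fun y hy => hy.deriv.symm)
  have hright := hasDerivWithinAt_Ici_of_tendsto_deriv hs hf.continuousWithinAt
    (nhdsWithin_mono _ (fun y hy => ne_of_gt hy) hdiff)
    (hderiv _ (nhdsWithin_mono _ fun y hy => ne_of_gt hy))
  have hleft := hasDerivWithinAt_Iic_of_tendsto_deriv hs hf.continuousWithinAt
    (nhdsWithin_mono _ (fun y hy => ne_of_lt hy) hdiff)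
    (hderiv _ (nhdsWithin_mono _ fun y hy => ne_of_lt hy))
  simpa using hleft.union hright

theorem differentiableAt_of_strictMonoOn_deriv {f : ℝ → ℝ} {s : Set ℝ} {x : ℝ} (hs : IsOpen s)
    (hf : ContinuousOn f s) (hmono : StrictMonoOn (deriv f) s) (hcont : ContinuousOn (deriv f) s)
    (hx : x ∈ s) : DifferentiableAt ℝ f x := by
  by_contra hnd
  have hzero : deriv f x = 0 := deriv_zero_of_not_differentiableAt hnd
  have hnear : ∀ᶠ y in 𝓝[≠] x, HasDerivAt f (deriv f y) y := by
    filter_upwards [nhdsWithin_le_nhds (hs.mem_nhds hx), self_mem_nhdsWithin] with y hy hne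
    refine (differentiableAt_of_deriv_ne_zero fun hy0 => hne ?_).hasDerivAt
    exact hmono.injOn hy hx (hy0.trans hzero.symm)
  exact hnd (hasDerivAt_of_eventually_hasDerivAt_nhdsNE hnear (hf.continuousAt (hs.mem_nhds hx))
    (hcont.continuousAt (hs.mem_nhds hx))).differentiableAt

theorem differentiableOn_of_deriv2_pos {f : ℝ → ℝ} {s : Set ℝ} (hs : IsOpen s)
    (hs' : Convex ℝ s) (hf : ContinuousOn f s) (hf2 : ∀ y ∈ s, 0 < deriv (deriv f) y) :
    DifferentiableOn ℝ f s := by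
  have hdiff : DifferentiableOn ℝ (deriv f) s := fun y hy =>
    (differentiableAt_of_deriv_ne_zero (hf2 y hy).ne').differentiableWithinAt
  have hmono : StrictMonoOn (deriv f) s :=
    strictMonoOn_of_deriv_pos hs' hdiff.continuousOn fun y hy => hf2 y (interior_subset hy)
  exact fun x hx => (differentiableAt_of_strictMonoOn_deriv hs hf hmono hdiff.continuousOn
    hx).differentiableWithinAt

theorem strongConvexOn_of_le_deriv2 {f : ℝ → ℝ} {D : Set ℝ} {m : ℝ} (hD : Convex ℝ D)
    (hf : ContinuousOn f D) (hf' : DifferentiableOn ℝ f (interior D))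
    (hf'' : DifferentiableOn ℝ (deriv f) (interior D))
    (hm : ∀ x ∈ interior D, m ≤ deriv (deriv f) x) : StrongConvexOn D m f := by
  simp only [strongConvexOn_iff_convex, Real.norm_eq_abs, sq_abs]
  have hderiv : ∀ x ∈ interior D,
      HasDerivAt (fun y => f y - m / 2 * y ^ 2) (deriv f x - m * x) x := fun x hx => by
    refine ((hf'.differentiableAt (isOpen_interior.mem_nhds hx)).hasDerivAt.fun_sub
      ((hasDerivAt_pow 2 x).const_mul (m / 2))).congr_deriv ?_
    simp only [Nat.cast_ofNat]
    ring
  have hmono : MonotoneOn (fun x => deriv f x - m * x) (interior D) := by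
    refine monotoneOn_of_deriv_nonneg hD.interior (hf''.continuousOn.sub (by fun_prop))
      (by rw [interior_interior]; exact hf''.sub (differentiableOn_id.const_mul m)) fun x hx => ?_
    rw [interior_interior] at hx
    have hx' := (hf''.differentiableAt (isOpen_interior.mem_nhds hx)).hasDerivAt.fun_sub
      (hasDerivAt_const_mul m)
    rw [hx'.deriv, sub_nonneg]
    exact hm x hx
  exact MonotoneOn.convexOn_of_deriv hD (by fun_prop)
    (fun x hx => (hderiv x hx).differentiableAt.differentiableWithinAt)
    (hmono.congr fun x hx => (hderiv x hx).deriv.symm)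

theorem StrongConvexOn.mul_sq_le_jensen_gap {f : ℝ → ℝ} {D : Set ℝ} {m x y α β : ℝ}
    (hf : StrongConvexOn D m f) (hx : x ∈ D) (hy : y ∈ D) (hα : 0 < α) (hβ : 0 < β) :
    m * (α * β) / (2 * (α + β)) * (x - y) ^ 2 ≤
      α * f x + β * f y - (α + β) * f ((α * x + β * y) / (α + β)) := by
  have hαβ : 0 < α + β := add_pos hα hβ
  have h := hf.2 hx hy (div_pos hα hαβ).le (div_pos hβ hαβ).le (by field_simp)
  simp only [smul_eq_mul, Real.norm_eq_abs, sq_abs] at h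
  have hz : α / (α + β) * x + β / (α + β) * y = (α * x + β * y) / (α + β) := by field_simp
  rw [hz] at h
  have := mul_le_mul_of_nonneg_left h hαβ.le
  field_simp at this ⊢
  linarith

theorem stmt_4_general (φ : ℝ → ℝ) (hconv : ConvexOn ℝ Set.univ φ)
    (hderiv : ∀ t : ℝ, 0 < t → 0 < deriv (deriv φ) t)
    (a b α β ω m : ℝ) (hα : 0 < α) (hβ : 0 < β) (hω : 0 < ω)
    (haω : ω ≤ a / α) (haω' : a / α ≤ ω⁻¹) (hbω : ω ≤ b / β) (hbω' : b / β ≤ ω⁻¹)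
    (hm : IsLeast (deriv (deriv φ) '' Set.Icc ω ω⁻¹) m) :
    (m * min (α ^ 2) (β ^ 2) / (2 * (α + β))) * (a / α - b / β) ^ 2 ≤
      α * φ (a / α) + β * φ (b / β) - (α + β) * φ ((a + b) / (α + β)) := by
  have hpos : Icc ω ω⁻¹ ⊆ Ioi 0 := fun t ht => hω.trans_le ht.1
  have hcont : ContinuousOn φ (Ioi 0) := (hconv.continuousOn isOpen_univ).mono (subset_univ _)
  have hdiff : DifferentiableOn ℝ φ (Ioi 0) :=
    differentiableOn_of_deriv2_pos isOpen_Ioi (convex_Ioi 0) hcont hderiv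
  have hdiff' : DifferentiableOn ℝ (deriv φ) (Ioi 0) := fun t ht =>
    (differentiableAt_of_deriv_ne_zero (hderiv t ht).ne').differentiableWithinAt
  have hstrong : StrongConvexOn (Icc ω ω⁻¹) m φ :=
    strongConvexOn_of_le_deriv2 (convex_Icc _ _) (hcont.mono hpos)
      (hdiff.mono (interior_subset.trans hpos)) (hdiff'.mono (interior_subset.trans hpos))
      fun t ht => hm.2 ⟨t, interior_subset ht, rfl⟩
  have hm0 : 0 ≤ m := by
    obtain ⟨t, ht, rfl⟩ := hm.1
    exact (hderiv t (hpos ht)).le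
  have hmin : min (α ^ 2) (β ^ 2) ≤ α * β := by
    rcases le_total α β with h | h
    · nlinarith [min_le_left (α ^ 2) (β ^ 2)]
    · nlinarith [min_le_right (α ^ 2) (β ^ 2)]
  have hmean : (α * (a / α) + β * (b / β)) / (α + β) = (a + b) / (α + β) := by field_simp
  calc (m * min (α ^ 2) (β ^ 2) / (2 * (α + β))) * (a / α - b / β) ^ 2
      ≤ m * (α * β) / (2 * (α + β)) * (a / α - b / β) ^ 2 := by gcongr
    _ ≤ _ := hmean ▸ hstrong.mul_sq_le_jensen_gap ⟨haω, haω'⟩ ⟨hbω, hbω'⟩ hα hβ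

theorem stmt_4 (φ : ℝ → ℝ) (hconv : ConvexOn ℝ Set.univ φ)
    (hnonneg : ∀ t, 0 ≤ φ t) (h0 : φ 0 = 0) (heven : ∀ t, φ (-t) = φ t)
    (hC2 : ContinuousOn (deriv (deriv φ)) (Set.Ioi (0 : ℝ)))
    (hderiv : ∀ t : ℝ, 0 < t → 0 < deriv (deriv φ) t)
    (a b α β ω m : ℝ) (ha : 0 < a) (hb : 0 < b) (hα : 0 < α) (hβ : 0 < β) (hω : 0 < ω)
    (haω : ω ≤ a / α) (haω' : a / α ≤ ω⁻¹) (hbω : ω ≤ b / β) (hbω' : b / β ≤ ω⁻¹)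
    (hm : IsLeast (deriv (deriv φ) '' Set.Icc ω ω⁻¹) m) :
    (m * min (α ^ 2) (β ^ 2) / (2 * (α + β))) * (a / α - b / β) ^ 2 ≤
      α * φ (a / α) + β * φ (b / β) - (α + β) * φ ((a + b) / (α + β)) :=
  stmt_4_general φ hconv hderiv a b α β ω m hα hβ hω haω haω' hbω hbω' hm
end

section
/- If K is an o-symmetric convex body in ℝⁿ with axial rotational symmetry around the line l through the origin, then the Banach–Mazur distance from K to the Euclidean ball satisfies δ_BM(K, Bⁿ) = min{ln λ : λ ≥ 1, E ⊆ K ⊆ λE for some o-symmetric ellipsoid E with axial rotational symmetry around l}. -/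
/-!
For unit vectors `u ⊥ e` and a linear map `ψ`, rotating `z` about the axis `ℝ ∙ u` to the two
points `⟪u, z⟫ u ± ‖z - ⟪u, z⟫ u‖ e` and applying the parallelogram law shows that `‖ψ ·‖²`
averages over these two rotations to the axially symmetric quadratic form
`‖ψ u‖² ⟪u, z⟫² + ‖ψ e‖² ‖z - ⟪u, z⟫ u‖²`. So if the ellipsoid `{‖ψ ·‖ ≤ 1}` lies between an
axially symmetric body `K` and `c • K`, then so does the axially symmetric ellipsoid of the
averaged form: a point of `K` has both rotations in `K`, and a point of the new ellipsoid has one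
of its two rotations in the old one. Since `K` and ellipsoids are symmetric and convex, the
translations in the Banach–Mazur distance can be dropped first.
-/

open Pointwise

theorem image_image_sub {V W F : Type*} [AddCommGroup V] [AddCommGroup W] [FunLike F V W]
    [AddMonoidHomClass F V W] (f : F) (y : V) (S : Set V) :
    f '' ((fun z => z - y) '' S) = (fun z => z - f y) '' (f '' S) := by
  simp only [Set.image_image, map_sub]

section Centering

variable {V : Type*} [AddCommGroup V] [Module ℝ V]

theorem subset_of_image_sub_subset_image_sub {K C : Set V} {x y : V}
    (hK : ∀ z ∈ K, -z ∈ K) (hC : Convex ℝ C) (hCneg : ∀ z ∈ C, -z ∈ C)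
    (h : (fun z => z - x) '' K ⊆ (fun z => z - y) '' C) : K ⊆ C := by
  intro k hk
  obtain ⟨c₁, hc₁, e₁⟩ := h ⟨k, hk, rfl⟩
  obtain ⟨c₂, hc₂, e₂⟩ := h ⟨-k, hK k hk, rfl⟩
  have hk : k = (2⁻¹ : ℝ) • c₁ + (2⁻¹ : ℝ) • -c₂ := by
    linear_combination (norm := module) (2⁻¹ : ℝ) • (e₂ - e₁)
  rw [hk]
  exact hC hc₁ (hCneg c₂ hc₂) (by norm_num) (by norm_num) (by norm_num)

theorem smul_image_sub (c : ℝ) (x : V) (S : Set V) :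
    c • ((fun z => z - x) '' S) = (fun z => z - c • x) '' (c • S) := by
  simp only [← Set.image_smul, Set.image_image, smul_sub]

theorem LinearEquiv.image_trans_smulOfNeZero (T : V ≃ₗ[ℝ] V) {r : ℝ} (hr : r ≠ 0) (S : Set V) :
    (T.trans (LinearEquiv.smulOfNeZero ℝ V r hr)) '' S = r • T '' S := by
  rw [← Set.image_smul, Set.image_image]
  rfl

theorem subset_and_subset_smul_of_image_sub {K C : Set V} {x y : V} {c : ℝ}
    (hKconv : Convex ℝ K) (hK : ∀ z ∈ K, -z ∈ K) (hCconv : Convex ℝ C) (hC : ∀ z ∈ C, -z ∈ C)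
    (hKC : (fun z => z - x) '' K ⊆ (fun z => z - y) '' C)
    (hCK : (fun z => z - y) '' C ⊆ c • ((fun z => z - x) '' K)) :
    K ⊆ C ∧ C ⊆ c • K := by
  rw [smul_image_sub] at hCK
  have hcK : ∀ z ∈ c • K, -z ∈ c • K :=
    fun _ ⟨k, hk, hkz⟩ => ⟨-k, hK k hk, by simp [← hkz]⟩
  exact ⟨subset_of_image_sub_subset_image_sub hK hCconv hC hKC,
    subset_of_image_sub_subset_image_sub hC (hKconv.smul c) hcK hCK⟩

end Centering

variable {E : Type*} [NormedAddCommGroup E] [InnerProductSpace ℝ E]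

open scoped InnerProductSpace

def IsAxiallySymmetric (u : E) (K : Set E) : Prop :=
  ∀ f : E ≃ₗᵢ[ℝ] E, f u = u → f '' K = K

namespace IsAxiallySymmetric

variable {u : E} {K : Set E}

theorem apply_mem_iff (hK : IsAxiallySymmetric u K) {f : E ≃ₗᵢ[ℝ] E} (hf : f u = u) {z : E} :
    f z ∈ K ↔ z ∈ K := by
  conv_lhs => rw [← hK f hf]
  exact f.injective.mem_set_image

theorem smul (hK : IsAxiallySymmetric u K) (c : ℝ) : IsAxiallySymmetric u (c • K) :=
  fun f hf => by rw [image_smul_set, hK f hf]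

end IsAxiallySymmetric

section Rotations

variable {u e : E}

theorem inner_sub_inner_smul_self (hu : ‖u‖ = 1) (z : E) : ⟪u, z - ⟪u, z⟫_ℝ • u⟫_ℝ = 0 := by
  rw [inner_sub_right, real_inner_smul_right, real_inner_self_eq_norm_sq, hu]
  ring

theorem exists_unit_inner_eq_zero [FiniteDimensional ℝ E] (hE : 2 ≤ Module.finrank ℝ E) (u : E) :
    ∃ e : E, ‖e‖ = 1 ∧ ⟪u, e⟫_ℝ = 0 := by
  have hpos : 0 < Module.finrank ℝ (ℝ ∙ u)ᗮ := by
    have := Submodule.finrank_add_finrank_orthogonal (ℝ ∙ u)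
    have : Module.finrank ℝ (ℝ ∙ u) ≤ 1 := by simpa using finrank_span_le_card (R := ℝ) {u}
    omega
  obtain ⟨⟨v, hv⟩, hv0⟩ := Module.finrank_pos_iff_exists_ne_zero.mp hpos
  have hv0 : v ≠ 0 := fun h => hv0 (Subtype.ext h)
  refine ⟨‖v‖⁻¹ • v, norm_smul_inv_norm hv0, ?_⟩
  rw [real_inner_smul_right,
    Submodule.mem_orthogonal_singleton_iff_inner_right.mp hv, mul_zero]

theorem exists_linearIsometryEquiv_fixing_apply_eq {w w' : E} (hw : ⟪u, w⟫_ℝ = 0)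
    (hw' : ⟪u, w'⟫_ℝ = 0) (hnorm : ‖w‖ = ‖w'‖) : ∃ f : E ≃ₗᵢ[ℝ] E, f u = u ∧ f w = w' := by
  refine ⟨Submodule.reflection (ℝ ∙ (w - w'))ᗮ, ?_, Submodule.reflection_sub hnorm⟩
  apply Submodule.reflection_mem_subspace_eq_self
  rw [Submodule.mem_orthogonal_singleton_iff_inner_right, inner_sub_left,
    real_inner_comm u w, real_inner_comm u w', hw, hw', sub_zero]

theorem exists_linearIsometryEquiv_fixing_apply_eq_add (hu : ‖u‖ = 1) (he : ‖e‖ = 1)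
    (hue : ⟪u, e⟫_ℝ = 0) (z : E) {t : ℝ} (ht : |t| = ‖z - ⟪u, z⟫_ℝ • u‖) :
    ∃ f : E ≃ₗᵢ[ℝ] E, f u = u ∧ f z = ⟪u, z⟫_ℝ • u + t • e := by
  obtain ⟨f, hfu, hfw⟩ := exists_linearIsometryEquiv_fixing_apply_eq
    (inner_sub_inner_smul_self hu z) (w' := t • e)
    (by rw [real_inner_smul_right, hue, mul_zero])
    (by rw [norm_smul, he, mul_one, ← ht, Real.norm_eq_abs])
  refine ⟨f, hfu, ?_⟩
  have hz : z = ⟪u, z⟫_ℝ • u + (z - ⟪u, z⟫_ℝ • u) := by abel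
  rw [hz, map_add, map_smul, hfu, hfw, ← hz]

end Rotations

section AxialScaling

variable {u : E}

noncomputable def axialScaling (u : E) (a b : ℝ) : E →ₗ[ℝ] E :=
  b • LinearMap.id + (a - b) • (innerₛₗ ℝ u).smulRight u

theorem axialScaling_apply (u : E) (a b : ℝ) (z : E) :
    axialScaling u a b z = (a * ⟪u, z⟫_ℝ) • u + b • (z - ⟪u, z⟫_ℝ • u) := by
  simp only [axialScaling, LinearMap.add_apply, LinearMap.smul_apply, LinearMap.id_apply,
    LinearMap.smulRight_apply, innerₛₗ_apply_apply]
  module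

theorem axialScaling_comp (hu : ‖u‖ = 1) (a b a' b' : ℝ) :
    axialScaling u a b ∘ₗ axialScaling u a' b' = axialScaling u (a * a') (b * b') := by
  ext z
  have hinner : ⟪u, axialScaling u a' b' z⟫_ℝ = a' * ⟪u, z⟫_ℝ := by
    rw [axialScaling_apply, inner_add_right, real_inner_smul_right, real_inner_smul_right,
      inner_sub_inner_smul_self hu, real_inner_self_eq_norm_sq, hu]
    ring
  rw [LinearMap.comp_apply, axialScaling_apply u a b, hinner, axialScaling_apply,
    axialScaling_apply]
  module

theorem axialScaling_one_one (u : E) : axialScaling u 1 1 = LinearMap.id := by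
  simp [axialScaling]

noncomputable def axialScalingEquiv (hu : ‖u‖ = 1) {a b : ℝ} (ha : a ≠ 0) (hb : b ≠ 0) :
    E ≃ₗ[ℝ] E :=
  .ofLinearMap (axialScaling u a b) (axialScaling u a⁻¹ b⁻¹)
    (by rw [axialScaling_comp hu, mul_inv_cancel₀ ha, mul_inv_cancel₀ hb, axialScaling_one_one])
    (by rw [axialScaling_comp hu, inv_mul_cancel₀ ha, inv_mul_cancel₀ hb, axialScaling_one_one])

@[simp]
theorem coe_axialScalingEquiv (hu : ‖u‖ = 1) {a b : ℝ} (ha : a ≠ 0) (hb : b ≠ 0) :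
    ⇑(axialScalingEquiv hu ha hb) = axialScaling u a b :=
  rfl

theorem norm_axialScaling_sq (hu : ‖u‖ = 1) (a b : ℝ) (z : E) :
    ‖axialScaling u a b z‖ ^ 2 = a ^ 2 * ⟪u, z⟫_ℝ ^ 2 + b ^ 2 * ‖z - ⟪u, z⟫_ℝ • u‖ ^ 2 := by
  have horth : ⟪(a * ⟪u, z⟫_ℝ) • u, b • (z - ⟪u, z⟫_ℝ • u)⟫_ℝ = 0 := by
    rw [real_inner_smul_left, real_inner_smul_right, inner_sub_inner_smul_self hu, mul_zero,
      mul_zero]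
  rw [axialScaling_apply, norm_add_sq_real, horth, norm_smul, norm_smul, hu, Real.norm_eq_abs,
    Real.norm_eq_abs]
  simp only [mul_pow, sq_abs]
  ring

theorem axialScaling_map_linearIsometryEquiv {f : E ≃ₗᵢ[ℝ] E} (hf : f u = u) (a b : ℝ) (z : E) :
    axialScaling u a b (f z) = f (axialScaling u a b z) := by
  have hinner : ⟪u, f z⟫_ℝ = ⟪u, z⟫_ℝ := by rw [← f.inner_map_map u z, hf]
  rw [axialScaling_apply, axialScaling_apply, hinner, map_add, map_smul, map_smul, map_sub,
    map_smul, hf]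

theorem isAxiallySymmetric_preimage_axialScaling (u : E) (a b : ℝ) :
    IsAxiallySymmetric u (axialScaling u a b ⁻¹' Metric.closedBall 0 1) := by
  intro f hf
  have hf' : f.symm u = u := f.symm_apply_eq.mpr hf.symm
  ext z
  simp only [f.image_eq_preimage_symm, Set.mem_preimage, mem_closedBall_zero_iff,
    axialScaling_map_linearIsometryEquiv hf', LinearIsometryEquiv.norm_map]

end AxialScaling

section Averaging

variable {u e : E}

theorem exists_norm_sq_add_norm_sq_eq_norm_axialScaling_sq (hu : ‖u‖ = 1) (he : ‖e‖ = 1)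
    (hue : ⟪u, e⟫_ℝ = 0) (ψ : E →ₗ[ℝ] E) (z : E) :
    ∃ g₁ g₂ : E ≃ₗᵢ[ℝ] E, g₁ u = u ∧ g₂ u = u ∧
      ‖ψ (g₁ z)‖ ^ 2 + ‖ψ (g₂ z)‖ ^ 2 = 2 * ‖axialScaling u ‖ψ u‖ ‖ψ e‖ z‖ ^ 2 := by
  set t := ‖z - ⟪u, z⟫_ℝ • u‖
  obtain ⟨g₁, hg₁u, hg₁z⟩ := exists_linearIsometryEquiv_fixing_apply_eq_add hu he hue z
    (t := t) (abs_of_nonneg (norm_nonneg _))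
  obtain ⟨g₂, hg₂u, hg₂z⟩ := exists_linearIsometryEquiv_fixing_apply_eq_add hu he hue z
    (t := -t) (by rw [abs_neg, abs_of_nonneg (norm_nonneg _)])
  refine ⟨g₁, g₂, hg₁u, hg₂u, ?_⟩
  have hpar := parallelogram_law_with_norm ℝ (⟪u, z⟫_ℝ • ψ u) (t • ψ e)
  simp only [hg₁z, hg₂z, neg_smul, ← sub_eq_add_neg, map_add, map_sub, map_smul]
  rw [hpar, norm_axialScaling_sq hu, norm_smul, norm_smul, mul_pow, mul_pow, Real.norm_eq_abs,
    Real.norm_eq_abs, sq_abs, sq_abs]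
  ring

theorem IsAxiallySymmetric.subset_preimage_axialScaling (hu : ‖u‖ = 1) (he : ‖e‖ = 1)
    (hue : ⟪u, e⟫_ℝ = 0) {K : Set E} (hK : IsAxiallySymmetric u K) {ψ : E →ₗ[ℝ] E}
    (hKψ : ∀ z ∈ K, ‖ψ z‖ ≤ 1) :
    K ⊆ axialScaling u ‖ψ u‖ ‖ψ e‖ ⁻¹' Metric.closedBall 0 1 := by
  intro z hz
  obtain ⟨g₁, g₂, hg₁, hg₂, hsum⟩ :=
    exists_norm_sq_add_norm_sq_eq_norm_axialScaling_sq hu he hue ψ z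
  have h₁ := hKψ _ ((hK.apply_mem_iff hg₁).mpr hz)
  have h₂ := hKψ _ ((hK.apply_mem_iff hg₂).mpr hz)
  rw [Set.mem_preimage, mem_closedBall_zero_iff, ← sq_le_one_iff₀ (norm_nonneg _)]
  nlinarith [norm_nonneg (ψ (g₁ z)), norm_nonneg (ψ (g₂ z))]

theorem IsAxiallySymmetric.preimage_axialScaling_subset (hu : ‖u‖ = 1) (he : ‖e‖ = 1)
    (hue : ⟪u, e⟫_ℝ = 0) {C : Set E} (hC : IsAxiallySymmetric u C) {ψ : E →ₗ[ℝ] E}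
    (hψC : ∀ z, ‖ψ z‖ ≤ 1 → z ∈ C) :
    axialScaling u ‖ψ u‖ ‖ψ e‖ ⁻¹' Metric.closedBall 0 1 ⊆ C := by
  intro z hz
  obtain ⟨g₁, g₂, hg₁, hg₂, hsum⟩ :=
    exists_norm_sq_add_norm_sq_eq_norm_axialScaling_sq hu he hue ψ z
  rw [Set.mem_preimage, mem_closedBall_zero_iff] at hz
  have : ‖ψ (g₁ z)‖ ≤ 1 ∨ ‖ψ (g₂ z)‖ ≤ 1 := by
    by_contra! h
    nlinarith [norm_nonneg (axialScaling u ‖ψ u‖ ‖ψ e‖ z)]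
  rcases this with h | h
  · exact (hC.apply_mem_iff hg₁).mp (hψC _ h)
  · exact (hC.apply_mem_iff hg₂).mp (hψC _ h)

end Averaging

theorem IsAxiallySymmetric.exists_image_closedBall_between [FiniteDimensional ℝ E]
    (hE : 2 ≤ Module.finrank ℝ E) {u : E} (hu : ‖u‖ = 1) {K : Set E}
    (hK : IsAxiallySymmetric u K) (Φ : E ≃ₗ[ℝ] E) {c : ℝ}
    (hKΦ : K ⊆ Φ '' Metric.closedBall 0 1) (hΦK : Φ '' Metric.closedBall 0 1 ⊆ c • K) :
    ∃ T : E ≃ₗ[ℝ] E, IsAxiallySymmetric u (T '' Metric.closedBall 0 1) ∧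
      K ⊆ T '' Metric.closedBall 0 1 ∧ T '' Metric.closedBall 0 1 ⊆ c • K := by
  obtain ⟨e, he, hue⟩ := exists_unit_inner_eq_zero hE u
  have hΦ (z : E) : z ∈ Φ '' Metric.closedBall 0 1 ↔ ‖Φ.symm z‖ ≤ 1 := by
    rw [Φ.image_eq_preimage_symm, Set.mem_preimage, mem_closedBall_zero_iff]
  have ha : ‖Φ.symm u‖ ≠ 0 := by simp [← norm_ne_zero_iff, hu]
  have hb : ‖Φ.symm e‖ ≠ 0 := by simp [← norm_ne_zero_iff, he]
  refine ⟨(axialScalingEquiv hu ha hb).symm, ?_⟩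
  rw [LinearEquiv.image_eq_preimage_symm, LinearEquiv.symm_symm, coe_axialScalingEquiv]
  exact ⟨isAxiallySymmetric_preimage_axialScaling u _ _,
    hK.subset_preimage_axialScaling hu he hue (ψ := Φ.symm.toLinearMap)
      fun z hz => (hΦ z).mp (hKΦ hz),
    (hK.smul c).preimage_axialScaling_subset hu he hue (ψ := Φ.symm.toLinearMap)
      fun z hz => hΦK ((hΦ z).mpr hz)⟩

theorem stmt_10_general (n : ℕ) (hn : 2 ≤ n) (u : EuclideanSpace ℝ (Fin n)) (hu : ‖u‖ = 1)
    (K : Set (EuclideanSpace ℝ (Fin n)))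
    (hKconv : Convex ℝ K)
    (hKsymm : ∀ x ∈ K, -x ∈ K)
    (hKrot : ∀ f : EuclideanSpace ℝ (Fin n) ≃ₗᵢ[ℝ] EuclideanSpace ℝ (Fin n),
      f u = u → f '' K = K) :
    sInf {l : ℝ | 0 ≤ l ∧
      ∃ (Φ : EuclideanSpace ℝ (Fin n) ≃ₗ[ℝ] EuclideanSpace ℝ (Fin n))
        (x y : EuclideanSpace ℝ (Fin n)),
        (fun z => z - x) '' K ⊆
          Φ '' ((fun z => z - y) '' Metric.closedBall 0 1) ∧
        Φ '' ((fun z => z - y) '' Metric.closedBall 0 1) ⊆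
          Real.exp l • ((fun z => z - x) '' K)} =
    sInf {l : ℝ | ∃ lam : ℝ, 1 ≤ lam ∧ l = Real.log lam ∧
      ∃ T : EuclideanSpace ℝ (Fin n) ≃ₗ[ℝ] EuclideanSpace ℝ (Fin n),
        (∀ f : EuclideanSpace ℝ (Fin n) ≃ₗᵢ[ℝ] EuclideanSpace ℝ (Fin n), f u = u →
          f '' (T '' Metric.closedBall 0 1) = T '' Metric.closedBall 0 1) ∧
        T '' Metric.closedBall 0 1 ⊆ K ∧ K ⊆ lam • (T '' Metric.closedBall 0 1)} := by
  congr 1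
  ext l
  constructor
  · rintro ⟨hl, Φ, x, y, hKΦ, hΦK⟩
    rw [image_image_sub] at hKΦ hΦK
    have hΦneg : ∀ z ∈ Φ '' Metric.closedBall 0 1, -z ∈ Φ '' Metric.closedBall 0 1 :=
      fun _ ⟨w, hw, hwz⟩ => ⟨-w, by simpa using hw, by rw [map_neg, hwz]⟩
    obtain ⟨hKΦ, hΦK⟩ := subset_and_subset_smul_of_image_sub hKconv hKsymm
      ((convex_closedBall 0 1).linear_image Φ.toLinearMap) hΦneg hKΦ hΦK
    obtain ⟨T, hT, hKT, hTK⟩ :=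
      IsAxiallySymmetric.exists_image_closedBall_between (by simpa using hn) hu hKrot Φ hKΦ hΦK
    have hl' : Real.exp (-l) ≠ 0 := (Real.exp_pos _).ne'
    refine ⟨Real.exp l, Real.one_le_exp hl, (Real.log_exp l).symm,
      T.trans (LinearEquiv.smulOfNeZero ℝ _ _ hl'), ?_⟩
    rw [LinearEquiv.image_trans_smulOfNeZero, smul_smul, ← Real.exp_add, add_neg_cancel,
      Real.exp_zero, one_smul, Set.smul_set_subset_iff₀ hl', ← Real.exp_neg, neg_neg]
    exact ⟨hT.smul _, hTK, hKT⟩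
  · rintro ⟨lam, hlam, rfl, T, -, hTK, hKT⟩
    have hlam0 : lam ≠ 0 := (zero_lt_one.trans_le hlam).ne'
    refine ⟨Real.log_nonneg hlam, T.trans (LinearEquiv.smulOfNeZero ℝ _ _ hlam0), 0, 0, ?_⟩
    simp only [sub_zero, Set.image_id', LinearEquiv.image_trans_smulOfNeZero,
      Real.exp_log (zero_lt_one.trans_le hlam)]
    exact ⟨hKT, Set.smul_set_mono hTK⟩

theorem stmt_10 (n : ℕ) (hn : 2 ≤ n) (u : EuclideanSpace ℝ (Fin n)) (hu : ‖u‖ = 1)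
    (K : Set (EuclideanSpace ℝ (Fin n)))
    (hKcomp : IsCompact K) (hKconv : Convex ℝ K)
    (hKint : (0 : EuclideanSpace ℝ (Fin n)) ∈ interior K)
    (hKsymm : ∀ x ∈ K, -x ∈ K)
    (hKrot : ∀ f : EuclideanSpace ℝ (Fin n) ≃ₗᵢ[ℝ] EuclideanSpace ℝ (Fin n),
      f u = u → f '' K = K) :
    sInf {l : ℝ | 0 ≤ l ∧
      ∃ (Φ : EuclideanSpace ℝ (Fin n) ≃ₗ[ℝ] EuclideanSpace ℝ (Fin n))
        (x y : EuclideanSpace ℝ (Fin n)),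
        (fun z => z - x) '' K ⊆
          Φ '' ((fun z => z - y) '' Metric.closedBall 0 1) ∧
        Φ '' ((fun z => z - y) '' Metric.closedBall 0 1) ⊆
          Real.exp l • ((fun z => z - x) '' K)} =
    sInf {l : ℝ | ∃ lam : ℝ, 1 ≤ lam ∧ l = Real.log lam ∧
      ∃ T : EuclideanSpace ℝ (Fin n) ≃ₗ[ℝ] EuclideanSpace ℝ (Fin n),
        (∀ f : EuclideanSpace ℝ (Fin n) ≃ₗᵢ[ℝ] EuclideanSpace ℝ (Fin n), f u = u →
          f '' (T '' Metric.closedBall 0 1) = T '' Metric.closedBall 0 1) ∧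
        T '' Metric.closedBall 0 1 ⊆ K ∧ K ⊆ lam • (T '' Metric.closedBall 0 1)} :=
  stmt_10_general n hn u hu K hKconv hKsymm hKrot
end

section
/- Let K ∈ 𝒦ⁿₒ, let φ ∈ 𝒞, and define F(λ) = ∫_{S^{n-1}} φ((x·w)/(λ h_K(w))) h_K(w) dS_K(w) for fixed x ∈ ℝⁿ, x ≠ 0, where S_K is the surface area measure. Then the set {λ > 0 : F(λ) ≤ n V(K)} is a closed half-line [λ₀, ∞) for some λ₀ > 0, i.e., the minimum defining the Orlicz projection body support function h_{Π_φ K}(x) is attained at a unique λ. -/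
/-!
Write `F(λ)` for the integral. Convexity of `φ` with `φ 0 = 0` gives `φ (c t) ≤ c φ t` for
`c ∈ [0, 1]`, so `F` is antitone, `F λ ≤ F 1 / λ → 0` at infinity, and `F` is continuous by
dominated convergence; the sublevel set `{F ≤ n V(K)}` is therefore a closed half-line as soon as
`F → ∞` at `0⁺`. For that, pick `σ = ±1` with `φ σ > 0`: on the boundary points whose normal
satisfies `⟪x, ν⟫ / σ ≥ δ > 0` the integrand is at least of order `1 / λ`, and this set has
positive `μH[n-1]`-measure because its orthogonal projection to `uᗮ` (`u = σ x / ‖x‖`) contains a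
ball: the ray `t • u + v` from a small `v ⊥ u` meets `∂K` at such a point. All integrals are finite
because `∂K` is the image of the sphere of `ℓ^∞` under the Lipschitz radial map `w ↦ w / gauge K w`.
-/

open RealInnerProductSpace MeasureTheory
open Set Filter Topology Metric Module
open scoped NNReal ENNReal

section ConvexFunction

variable {φ : ℝ → ℝ}

theorem ConvexOn.map_mul_le_mul_of_map_zero (hφ : ConvexOn ℝ univ φ) (hφ0 : φ 0 = 0) {c : ℝ}
    (hc0 : 0 ≤ c) (hc1 : c ≤ 1) (t : ℝ) : φ (c * t) ≤ c * φ t := by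
  simpa [hφ0] using hφ.2 (mem_univ t) (mem_univ 0) hc0 (sub_nonneg.2 hc1) (by ring)

theorem ConvexOn.mul_map_le_map_mul (hφ : ConvexOn ℝ univ φ) (hφ0 : φ 0 = 0) {s : ℝ}
    (hs : 1 ≤ s) (t : ℝ) : s * φ t ≤ φ (s * t) := by
  have hs0 : 0 < s := zero_lt_one.trans_le hs
  have h := hφ.map_mul_le_mul_of_map_zero hφ0 (inv_nonneg.2 hs0.le) (inv_le_one_of_one_le₀ hs)
    (s * t)
  rw [inv_mul_cancel_left₀ hs0.ne'] at h
  calc s * φ t ≤ s * (s⁻¹ * φ (s * t)) := by gcongr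
    _ = φ (s * t) := mul_inv_cancel_left₀ hs0.ne' _

theorem ConvexOn.map_div_mul_le (hφ : ConvexOn ℝ univ φ) (hφ0 : φ 0 = 0)
    (hφnn : ∀ t, 0 ≤ φ t) (y : ℝ) {a b t : ℝ} (ha : 0 < a) (hab : a ≤ b) (ht : 0 ≤ t) :
    φ (y / (b * t)) * t ≤ φ (y / (a * t)) * t := by
  have hb : 0 < b := ha.trans_le hab
  have hy : y / (b * t) = a / b * (y / (a * t)) := by
    rcases ht.eq_or_lt with rfl | ht
    · simp
    · field_simp
  rw [hy]
  gcongr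
  exact (hφ.map_mul_le_mul_of_map_zero hφ0 (by positivity) ((div_le_one hb).2 hab) _).trans
    (mul_le_of_le_one_left (hφnn _) ((div_le_one hb).2 hab))

theorem exists_abs_eq_one_map_pos (hφpos : ∀ t : ℝ, t ≠ 0 → 0 < φ (-t) + φ t) :
    ∃ σ : ℝ, |σ| = 1 ∧ 0 < φ σ := by
  by_cases h : 0 < φ 1
  · exact ⟨1, abs_one, h⟩
  · refine ⟨-1, by simp, ?_⟩
    linarith [hφpos 1 one_ne_zero]

end ConvexFunction

section OrliczIntegral

variable {α : Type*} [MeasurableSpace α] {μ : Measure α} {φ : ℝ → ℝ} {f h : α → ℝ}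

/-- With `μ = S_K`, `f w = x ⬝ w` and `h = h_K` this is the functional whose sublevel sets
define the Orlicz projection body. -/
noncomputable def orliczIntegral (φ : ℝ → ℝ) (μ : Measure α) (f h : α → ℝ) (lam : ℝ) : ℝ :=
  ∫ z, φ (f z / (lam * h z)) * h z ∂μ

theorem integrable_orliczIntegrand [IsFiniteMeasure μ] (hφ : Continuous φ)
    (hf : AEMeasurable f μ) (hh : AEMeasurable h μ) {B r R : ℝ} (hfB : ∀ᵐ z ∂μ, |f z| ≤ B)
    (hhb : ∀ᵐ z ∂μ, h z ∈ Icc r R) (hr : 0 < r) {lam : ℝ} (hlam : 0 < lam) :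
    Integrable (fun z => φ (f z / (lam * h z)) * h z) μ := by
  obtain ⟨C, hC⟩ := (isCompact_Icc (a := -(B / (lam * r))) (b := B / (lam * r)))
    |>.exists_bound_of_continuousOn hφ.continuousOn
  refine Integrable.of_bound ((hφ.measurable.comp_aemeasurable
    (hf.div (hh.const_mul lam))).mul hh).aestronglyMeasurable (C * R) ?_
  filter_upwards [hfB, hhb] with z hfz ⟨hrz, hRz⟩
  have hhz : 0 < h z := hr.trans_le hrz
  have harg : |f z / (lam * h z)| ≤ B / (lam * r) := by
    rw [abs_div, abs_of_pos (mul_pos hlam hhz)]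
    exact div_le_div₀ ((abs_nonneg _).trans hfz) hfz (mul_pos hlam hr)
      (mul_le_mul_of_nonneg_left hrz hlam.le)
  have hφz := hC _ (abs_le.1 harg)
  rw [norm_mul, Real.norm_of_nonneg hhz.le]
  exact mul_le_mul hφz hRz hhz.le ((norm_nonneg _).trans hφz)

theorem orliczIntegral_antitoneOn (hφ : ConvexOn ℝ univ φ) (hφ0 : φ 0 = 0)
    (hφnn : ∀ t, 0 ≤ φ t)
    (hint : ∀ lam, 0 < lam → Integrable (fun z => φ (f z / (lam * h z)) * h z) μ)
    (hh : ∀ᵐ z ∂μ, 0 < h z) : AntitoneOn (orliczIntegral φ μ f h) (Ioi 0) := by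
  intro a ha b hb hab
  refine integral_mono_ae (hint b hb) (hint a ha) ?_
  filter_upwards [hh] with z hz
  exact hφ.map_div_mul_le hφ0 hφnn (f z) ha hab hz.le

theorem orliczIntegral_le_div (hφ : ConvexOn ℝ univ φ) (hφ0 : φ 0 = 0)
    (hint : ∀ lam, 0 < lam → Integrable (fun z => φ (f z / (lam * h z)) * h z) μ)
    (hh : ∀ᵐ z ∂μ, 0 < h z) {lam : ℝ} (hlam : 1 ≤ lam) :
    orliczIntegral φ μ f h lam ≤ orliczIntegral φ μ f h 1 / lam := by
  have hlam0 : 0 < lam := zero_lt_one.trans_le hlam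
  rw [div_eq_inv_mul, orliczIntegral, orliczIntegral, ← integral_const_mul]
  refine integral_mono_ae (hint lam hlam0) ((hint 1 one_pos).const_mul _) ?_
  filter_upwards [hh] with z hz
  have harg : f z / (lam * h z) = lam⁻¹ * (f z / (1 * h z)) := by field_simp
  rw [harg, ← mul_assoc]
  gcongr
  exact hφ.map_mul_le_mul_of_map_zero hφ0 (inv_nonneg.2 hlam0.le) (inv_le_one_of_one_le₀ hlam) _

theorem tendsto_orliczIntegral_atTop (hφ : ConvexOn ℝ univ φ) (hφ0 : φ 0 = 0)
    (hφnn : ∀ t, 0 ≤ φ t)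
    (hint : ∀ lam, 0 < lam → Integrable (fun z => φ (f z / (lam * h z)) * h z) μ)
    (hh : ∀ᵐ z ∂μ, 0 < h z) : Tendsto (orliczIntegral φ μ f h) atTop (𝓝 0) := by
  refine tendsto_of_tendsto_of_tendsto_of_le_of_le' tendsto_const_nhds
    (tendsto_const_nhds.div_atTop tendsto_id) (Eventually.of_forall fun lam => ?_)
    ((eventually_ge_atTop 1).mono fun lam => orliczIntegral_le_div hφ hφ0 hint hh)
  exact integral_nonneg_of_ae (hh.mono fun z hz => mul_nonneg (hφnn _) hz.le)

theorem continuousOn_orliczIntegral (hφ : ConvexOn ℝ univ φ) (hφ0 : φ 0 = 0)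
    (hφnn : ∀ t, 0 ≤ φ t)
    (hint : ∀ lam, 0 < lam → Integrable (fun z => φ (f z / (lam * h z)) * h z) μ)
    (hh : ∀ᵐ z ∂μ, 0 < h z) : ContinuousOn (orliczIntegral φ μ f h) (Ioi 0) := by
  have hφc : Continuous φ := continuousOn_univ.1 (hφ.continuousOn isOpen_univ)
  intro lam₀ hlam₀
  have hlam₀' : 0 < lam₀ / 2 := half_pos hlam₀
  refine (continuousAt_of_dominated ?_ ?_ (hint _ hlam₀') ?_).continuousWithinAt
  · filter_upwards [Ioi_mem_nhds hlam₀] with lam hlam using (hint lam hlam).aestronglyMeasurable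
  · filter_upwards [Ioi_mem_nhds (half_lt_self hlam₀)] with lam hlam
    filter_upwards [hh] with z hz
    rw [Real.norm_of_nonneg (mul_nonneg (hφnn _) hz.le)]
    exact hφ.map_div_mul_le hφ0 hφnn (f z) hlam₀' hlam.le hz.le
  · filter_upwards [hh] with z hz
    exact (hφc.continuousAt.comp (continuousAt_const.div (continuousAt_id.mul continuousAt_const)
      (mul_pos hlam₀ hz).ne')).mul continuousAt_const

theorem tendsto_orliczIntegral_nhdsGT_zero [IsFiniteMeasure μ] (hφ : ConvexOn ℝ univ φ)
    (hφ0 : φ 0 = 0) (hφnn : ∀ t, 0 ≤ φ t)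
    (hint : ∀ lam, 0 < lam → Integrable (fun z => φ (f z / (lam * h z)) * h z) μ)
    (hf : AEMeasurable f μ) {r R : ℝ} (hhb : ∀ᵐ z ∂μ, h z ∈ Icc r R) (hr : 0 < r)
    {σ δ : ℝ} (hσ : 0 < φ σ) (hδ : 0 < δ) (hA : 0 < μ {z | δ ≤ f z / σ}) :
    Tendsto (orliczIntegral φ μ f h) (𝓝[>] 0) atTop := by
  set A := {z | δ ≤ f z / σ}
  have hAm : NullMeasurableSet A μ := (hf.div_const σ).nullMeasurable measurableSet_Ici
  have hR : 0 < R := by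
    have : (ae μ).NeBot := ae_neBot.2 (by rintro rfl; simp at hA)
    obtain ⟨z, hz⟩ := hhb.exists
    exact hr.trans_le (hz.1.trans hz.2)
  have hAreal : 0 < μ.real A := ENNReal.toReal_pos hA.ne' (measure_ne_top μ A)
  refine tendsto_atTop_mono' _ ?_ (tendsto_inv_nhdsGT_zero.const_mul_atTop
    (by positivity : 0 < δ * φ σ * r / R * μ.real A))
  filter_upwards [Ioo_mem_nhdsGT (div_pos hδ hR)] with lam ⟨hlam, hlamδ⟩
  have hbound : A.indicator (fun _ => δ * φ σ * r / (lam * R)) ≤ᵐ[μ]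
      fun z => φ (f z / (lam * h z)) * h z := by
    filter_upwards [hhb] with z ⟨hrz, hRz⟩
    have hhz : 0 < h z := hr.trans_le hrz
    by_cases hz : z ∈ A
    · rw [indicator_of_mem hz]
      have hσ0 : σ ≠ 0 := by rintro rfl; simp [hφ0] at hσ
      have hs : 1 ≤ δ / (lam * R) := by
        rw [one_le_div (mul_pos hlam hR)]
        exact ((lt_div_iff₀ hR).1 hlamδ).le
      have hsz : δ / (lam * R) ≤ f z / σ / (lam * h z) :=
        div_le_div₀ (hδ.le.trans hz) hz (mul_pos hlam hhz) (mul_le_mul_of_nonneg_left hRz hlam.le)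
      calc δ * φ σ * r / (lam * R) = δ / (lam * R) * φ σ * r := by ring
        _ ≤ f z / σ / (lam * h z) * φ σ * h z := by
          gcongr
          exact mul_nonneg (zero_le_one.trans (hs.trans hsz)) hσ.le
        _ ≤ φ (f z / σ / (lam * h z) * σ) * h z := by
          gcongr
          exact hφ.mul_map_le_map_mul hφ0 (hs.trans hsz) σ
        _ = φ (f z / (lam * h z)) * h z := by
          congr 2
          field_simp
    · rw [indicator_of_notMem hz]
      exact mul_nonneg (hφnn _) hhz.le
  calc δ * φ σ * r / R * μ.real A * lam⁻¹
      = ∫ z, A.indicator (fun _ => δ * φ σ * r / (lam * R)) z ∂μ := by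
        rw [integral_indicator₀ hAm, setIntegral_const, smul_eq_mul]
        field_simp
    _ ≤ orliczIntegral φ μ f h lam :=
        integral_mono_of_nonneg (Eventually.of_forall fun z => indicator_nonneg
          (fun _ _ => by positivity) z) (hint lam hlam) hbound

end OrliczIntegral

theorem exists_setOf_le_eq_Ici {F : ℝ → ℝ} {c : ℝ} (hcont : ContinuousOn F (Ioi 0))
    (hanti : AntitoneOn F (Ioi 0)) (hzero : Tendsto F (𝓝[>] 0) atTop)
    (hc : ∃ lam, 0 < lam ∧ F lam ≤ c) :
    ∃ lam₀, 0 < lam₀ ∧ {lam | 0 < lam ∧ F lam ≤ c} = Ici lam₀ := by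
  obtain ⟨ε, hε, hεF⟩ := mem_nhdsGT_iff_exists_Ioo_subset.1 (hzero.eventually_gt_atTop c)
  set S := {lam | 0 < lam ∧ F lam ≤ c}
  have hS : S = Ici ε ∩ F ⁻¹' Iic c := by
    ext lam
    refine ⟨fun ⟨hlam, hle⟩ => ⟨not_lt.1 fun h => (hεF ⟨hlam, h⟩).not_ge hle, hle⟩,
      fun ⟨hlam, hle⟩ => ⟨(mem_Ioi.1 hε).trans_le hlam, hle⟩⟩
  have hclosed : IsClosed S := hS ▸ (hcont.mono (Ici_subset_Ioi.2 hε)).preimage_isClosed_of_isClosed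
    isClosed_Ici isClosed_Iic
  have hbdd : BddBelow S := ⟨ε, fun lam hlam => (hS ▸ hlam).1⟩
  obtain ⟨hpos, hle⟩ := hclosed.csInf_mem hc hbdd
  refine ⟨sInf S, hpos, Subset.antisymm (fun lam hlam => csInf_le hbdd hlam) fun lam hlam => ?_⟩
  exact ⟨hpos.trans_le hlam, (hanti hpos (hpos.trans_le hlam) hlam).trans hle⟩

section Frontier

variable {E : Type*} [NormedAddCommGroup E] [NormedSpace ℝ E] {K : Set E}

theorem frontier_subset_image_gauge_inv_smul (hKconv : Convex ℝ K) (hK0 : K ∈ 𝓝 0)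
    {S : Set E} (hS : ∀ z ≠ 0, ∃ c : ℝ, 0 < c ∧ c • z ∈ S) :
    frontier K ⊆ (fun w => (gauge K w)⁻¹ • w) '' S := by
  intro z hz
  have hgz : gauge K z = 1 := (gauge_eq_one_iff_mem_frontier hKconv hK0).2 hz
  obtain ⟨c, hc, hcS⟩ := hS z (by rintro rfl; simp at hgz)
  refine ⟨c • z, hcS, ?_⟩
  simp only [gauge_smul_of_nonneg hc.le, hgz, smul_eq_mul, mul_one, smul_smul,
    inv_mul_cancel₀ hc.ne', one_smul]

theorem exists_lipschitzOnWith_gauge_inv_smul (hKconv : Convex ℝ K) (hK0 : K ∈ 𝓝 0)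
    (hKb : Bornology.IsBounded K) {S : Set E} (hS : IsCompact S) (h0S : (0 : E) ∉ S) :
    ∃ C, LipschitzOnWith C (fun w => (gauge K w)⁻¹ • w) S := by
  obtain ⟨L, hL⟩ := hKconv.lipschitz_gauge hK0
  have hpos : ∀ w ∈ S, 0 < gauge K w := fun w hw =>
    (gauge_pos (absorbent_nhds_zero hK0) (NormedSpace.isVonNBounded_iff ℝ |>.2 hKb)).2
      (ne_of_mem_of_not_mem hw h0S)
  obtain ⟨M, hM⟩ := hS.exists_bound_of_continuousOn
    ((continuous_gauge hKconv hK0).continuousOn.inv₀ fun w hw => (hpos w hw).ne')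
  obtain ⟨C, hC⟩ := hS.exists_bound_of_continuousOn continuous_id.continuousOn
  refine ⟨(M + M ^ 2 * L * C).toNNReal, LipschitzOnWith.of_dist_le_mul fun w hw w' hw' => ?_⟩
  have hM0 : 0 ≤ M := (norm_nonneg _).trans (hM w hw)
  have hC0 : 0 ≤ C := (norm_nonneg _).trans (hC w hw)
  have hgw := hM w hw
  have hgw' := hM w' hw'
  rw [Real.norm_eq_abs] at hgw hgw'
  have hinv : |(gauge K w)⁻¹ - (gauge K w')⁻¹| ≤ M ^ 2 * L * dist w w' := by
    rw [inv_sub_inv (hpos w hw).ne' (hpos w' hw').ne', abs_div, abs_mul, div_eq_mul_inv,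
      mul_inv, ← abs_inv, ← abs_inv, abs_sub_comm, ← Real.dist_eq]
    calc dist (gauge K w) (gauge K w') * (|(gauge K w)⁻¹| * |(gauge K w')⁻¹|)
        ≤ L * dist w w' * (M * M) := by
          gcongr
          exacts [hL.dist_le_mul w w', hgw, hgw']
      _ = M ^ 2 * L * dist w w' := by ring
  have hsplit : (gauge K w)⁻¹ • w - (gauge K w')⁻¹ • w' =
      (gauge K w)⁻¹ • (w - w') + ((gauge K w)⁻¹ - (gauge K w')⁻¹) • w' := by
    rw [smul_sub, sub_smul]; abel
  rw [Real.coe_toNNReal _ (by positivity), dist_eq_norm, hsplit]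
  calc ‖(gauge K w)⁻¹ • (w - w') + ((gauge K w)⁻¹ - (gauge K w')⁻¹) • w'‖
      ≤ |(gauge K w)⁻¹| * ‖w - w'‖ + |(gauge K w)⁻¹ - (gauge K w')⁻¹| * ‖w'‖ := by
        refine (norm_add_le _ _).trans_eq ?_
        rw [norm_smul, norm_smul, Real.norm_eq_abs, Real.norm_eq_abs]
    _ ≤ M * dist w w' + M ^ 2 * L * dist w w' * C := by
        rw [← dist_eq_norm]
        gcongr
        exacts [hgw, hC w' hw']
    _ = (M + M ^ 2 * L * C) * dist w w' := by ring

theorem exists_nonneg_smul_add_mem_frontier (hKb : Bornology.IsBounded K) {u v : E} (hu : u ≠ 0)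
    (hv : v ∈ K) : ∃ t : ℝ, 0 ≤ t ∧ t • u + v ∈ frontier K := by
  set γ : ℝ → E := fun t => |t| • u + v
  have hγ : Continuous γ := by fun_prop
  obtain ⟨C, hC⟩ := hKb.exists_norm_le
  have hu' : 0 < ‖u‖ := norm_pos_iff.2 hu
  set T := (C + ‖v‖ + 1) / ‖u‖
  have hT : 0 < T := div_pos (by linarith [hC v hv, norm_nonneg v]) hu'
  have hfar : γ T ∉ K := fun hK => by
    have h1 : ‖|T| • u‖ ≤ ‖γ T‖ + ‖v‖ := by simpa [γ] using norm_sub_le (γ T) v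
    have h2 : ‖|T| • u‖ = C + ‖v‖ + 1 := by
      rw [norm_smul, Real.norm_eq_abs, abs_abs, abs_of_pos hT, div_mul_cancel₀ _ hu'.ne']
    linarith [hC _ hK]
  obtain ⟨t, ht⟩ := nonempty_frontier_iff (s := γ ⁻¹' K).2 ⟨⟨0, by simpa [γ] using hv⟩,
    fun h => hfar (by rw [← mem_preimage, h]; trivial)⟩
  exact ⟨|t|, abs_nonneg t, hγ.frontier_preimage_subset K ht⟩

end Frontier

theorem lipschitzWith_one_insertNth {N : ℕ} (i : Fin (N + 1)) (s : ℝ) :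
    LipschitzWith 1 (Fin.insertNth (α := fun _ => ℝ) i s) :=
  LipschitzWith.mk_one fun y y' => (dist_pi_le_iff dist_nonneg).2 fun j => by
    cases j using Fin.succAboveCases i with
    | x => simp
    | p k => simpa using dist_le_pi_dist y y' k

theorem hausdorffMeasure_sphere_pi_lt_top (N : ℕ) :
    μH[N] (sphere (0 : Fin (N + 1) → ℝ) 1) < ⊤ := by
  have hface : ∀ i (s : ℝ),
      μH[N] (Fin.insertNth (α := fun _ => ℝ) i s '' closedBall (0 : Fin N → ℝ) 1) < ⊤ :=
    fun i s => calc
      _ ≤ 1 ^ (N : ℝ) * μH[N] (closedBall (0 : Fin N → ℝ) 1) :=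
        (lipschitzWith_one_insertNth i s).hausdorffMeasure_image_le (Nat.cast_nonneg N) _
      _ < ⊤ := by
        have h := hausdorffMeasure_pi_real (ι := Fin N)
        rw [Fintype.card_fin] at h
        simp [h]
  have hcover : sphere (0 : Fin (N + 1) → ℝ) 1 ⊆ ⋃ i,
      (Fin.insertNth (α := fun _ => ℝ) i 1 '' closedBall 0 1 ∪
        Fin.insertNth (α := fun _ => ℝ) i (-1) '' closedBall 0 1) := by
    intro w hw
    rw [mem_sphere_zero_iff_norm] at hw
    obtain ⟨i, -, hi⟩ := Finset.exists_max_image Finset.univ (fun j => |w j|) ⟨0, Finset.mem_univ 0⟩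
    have hwi : |w i| = 1 := le_antisymm (hw ▸ norm_le_pi_norm w i)
      (hw ▸ (pi_norm_le_iff_of_nonneg (abs_nonneg _)).2 fun j => hi j (Finset.mem_univ j))
    have hrem : Fin.removeNth i w ∈ closedBall 0 1 := by
      rw [mem_closedBall_zero_iff, pi_norm_le_iff_of_nonneg zero_le_one]
      exact fun k => hw ▸ norm_le_pi_norm w _
    refine mem_iUnion.2 ⟨i, ?_⟩
    rcases (abs_eq zero_le_one).1 hwi with h | h
    · exact Or.inl ⟨_, hrem, by rw [← h, Fin.insertNth_self_removeNth]⟩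
    · exact Or.inr ⟨_, hrem, by rw [← h, Fin.insertNth_self_removeNth]⟩
  refine (measure_mono hcover).trans_lt ((measure_iUnion_fintype_le _ _).trans_lt
    (ENNReal.sum_lt_top.2 fun i _ => (measure_union_le _ _).trans_lt
      (ENNReal.add_lt_top.2 ⟨hface i 1, hface i (-1)⟩)))

theorem hausdorffMeasure_frontier_lt_top {E : Type*} [NormedAddCommGroup E] [NormedSpace ℝ E]
    [FiniteDimensional ℝ E] [MeasurableSpace E] [BorelSpace E] {N : ℕ} (hE : finrank ℝ E = N + 1)
    {K : Set E} (hKconv : Convex ℝ K) (hK0 : K ∈ 𝓝 0) (hKb : Bornology.IsBounded K) :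
    μH[N] (frontier K) < ⊤ := by
  let e : (Fin (N + 1) → ℝ) ≃L[ℝ] E :=
    ContinuousLinearEquiv.ofFinrankEq (by rw [Module.finrank_fin_fun, hE])
  set S := e '' sphere 0 1
  have h0S : (0 : E) ∉ S := by
    rintro ⟨w, hw, hw0⟩
    rw [e.map_eq_zero_iff] at hw0
    simp [hw0] at hw
  have hray : ∀ z ≠ 0, ∃ c : ℝ, 0 < c ∧ c • z ∈ S := fun z hz =>
    ⟨‖e.symm z‖⁻¹, by simpa using hz, ‖e.symm z‖⁻¹ • e.symm z,
      by simp [norm_smul, e.symm.map_eq_zero_iff.not.2 hz], by simp⟩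
  obtain ⟨C, hC⟩ := exists_lipschitzOnWith_gauge_inv_smul hKconv hK0 hKb
    ((isCompact_sphere 0 1).image e.continuous) h0S
  calc μH[N] (frontier K) ≤ μH[N] ((fun w => (gauge K w)⁻¹ • w) '' S) :=
        measure_mono (frontier_subset_image_gauge_inv_smul hKconv hK0 hray)
    _ ≤ C ^ (N : ℝ) * (‖(e : (Fin (N + 1) → ℝ) →L[ℝ] E)‖₊ ^ (N : ℝ) *
          μH[N] (sphere (0 : Fin (N + 1) → ℝ) 1)) :=
        (hC.hausdorffMeasure_image_le (Nat.cast_nonneg N)).trans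
          (by gcongr; exact e.lipschitz.hausdorffMeasure_image_le (Nat.cast_nonneg N) _)
    _ < ⊤ := by
        have hpow : ∀ a : ℝ≥0, (a : ℝ≥0∞) ^ (N : ℝ) < ⊤ := fun a =>
          ENNReal.rpow_lt_top_of_nonneg (Nat.cast_nonneg N) ENNReal.coe_ne_top
        exact ENNReal.mul_lt_top (hpow C) (ENNReal.mul_lt_top (hpow _)
          (hausdorffMeasure_sphere_pi_lt_top N))

section InnerProductSpace

variable {E : Type*} [NormedAddCommGroup E] [InnerProductSpace ℝ E] {K : Set E} {r R : ℝ}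
  {ν : E → E} {u : E}

noncomputable def supportFun (K : Set E) (v : E) : ℝ :=
  sSup ((fun y => ⟪y, v⟫) '' K)

theorem le_of_closedBall_subset_of_inner_le (hr : 0 ≤ r) (hrK : closedBall 0 r ⊆ K) {n : E}
    (hn : ‖n‖ = 1) {c : ℝ} (hc : ∀ y ∈ K, ⟪y, n⟫ ≤ c) : r ≤ c := by
  have h := hc (r • n) (hrK (by simp [norm_smul, hn, abs_of_nonneg hr]))
  rwa [real_inner_smul_left, real_inner_self_eq_norm_sq, hn, one_pow, mul_one] at h

theorem exists_orthonormal_forall_inner_eq_zero [FiniteDimensional ℝ E] {N : ℕ}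
    (hE : finrank ℝ E = N + 1) (hu : u ≠ 0) :
    ∃ b : Fin N → E, Orthonormal ℝ b ∧ ∀ k, ⟪u, b k⟫ = 0 := by
  have : Fact (finrank ℝ E = N + 1) := ⟨hE⟩
  have hN := Submodule.finrank_orthogonal_span_singleton (𝕜 := ℝ) (n := N) hu
  set ob := stdOrthonormalBasis ℝ (ℝ ∙ u)ᗮ
  refine ⟨fun k => (ob (Fin.cast hN.symm k) : E),
    (ob.orthonormal.comp_linearIsometry (Submodule.subtypeₗᵢ _)).comp _ (Fin.cast_injective _),
    fun k => Submodule.mem_orthogonal_singleton_iff_inner_right.1 (ob _).2⟩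

theorem div_le_inner_of_mem_frontier (hr : 0 < r) (hrK : closedBall 0 r ⊆ K)
    (hKR : K ⊆ closedBall 0 R)
    (hν : ∀ z ∈ frontier K, ‖ν z‖ = 1 ∧ ∀ y ∈ K, ⟪y, ν z⟫ ≤ ⟪z, ν z⟫) {v : E} {t : ℝ}
    (hu : ‖u‖ = 1) (huv : ⟪u, v⟫ = 0) (hv : ‖v‖ ≤ r / 2) (ht : 0 ≤ t)
    (hz : t • u + v ∈ frontier K) : r / (2 * R) ≤ ⟪u, ν (t • u + v)⟫ := by
  set z := t • u + v
  obtain ⟨hνz, hsupp⟩ := hν z hz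
  have hrz : r ≤ t * ⟪u, ν z⟫ + ⟪v, ν z⟫ := by
    simpa [z, inner_add_left, real_inner_smul_left] using
      le_of_closedBall_subset_of_inner_le hr.le hrK hνz hsupp
  have hvν : ⟪v, ν z⟫ ≤ r / 2 := by
    simpa [hνz] using (real_inner_le_norm v (ν z)).trans (by simpa [hνz] using hv)
  have htR : t ≤ R := by
    have htz : t = ⟪u, z⟫ := by
      simp [z, inner_add_right, real_inner_smul_right, huv, hu]
    have hzR : ‖z‖ ≤ R := mem_closedBall_zero_iff.1 (closure_minimal hKR isClosed_closedBall hz.1)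
    rw [htz]
    exact (real_inner_le_norm u z).trans (by rwa [hu, one_mul])
  have htν : r / 2 ≤ t * ⟪u, ν z⟫ := by linarith
  have htpos : 0 < t := lt_of_le_of_ne ht fun h => by simp [← h] at htν; linarith
  have hνpos : 0 < ⟪u, ν z⟫ := pos_of_mul_pos_right (by linarith) ht
  rw [div_le_iff₀ (by linarith)]
  nlinarith

theorem closedBall_subset_image_inner_frontier (hr : 0 < r) (hrK : closedBall 0 r ⊆ K)
    (hKR : K ⊆ closedBall 0 R)
    (hν : ∀ z ∈ frontier K, ‖ν z‖ = 1 ∧ ∀ y ∈ K, ⟪y, ν z⟫ ≤ ⟪z, ν z⟫) {N : ℕ}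
    {b : Fin N → E} (hb : Orthonormal ℝ b) (hu : ‖u‖ = 1) (hbu : ∀ k, ⟪u, b k⟫ = 0) :
    closedBall (0 : Fin N → ℝ) (r / (2 * (N + 1))) ⊆
      (fun z k => ⟪b k, z⟫) '' {z | z ∈ frontier K ∧ r / (2 * R) ≤ ⟪u, ν z⟫} := by
  intro y hy
  set v := ∑ k, y k • b k
  have hv : ‖v‖ ≤ r / 2 := by
    calc ‖v‖ ≤ ∑ k, ‖y k • b k‖ := norm_sum_le _ _
      _ ≤ ∑ _k : Fin N, r / (2 * (N + 1)) := Finset.sum_le_sum fun k _ => by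
          rw [norm_smul, hb.1 k, mul_one]
          exact (norm_le_pi_norm y k).trans (mem_closedBall_zero_iff.1 hy)
      _ ≤ r / 2 := by
          rw [Finset.sum_const, Finset.card_univ, Fintype.card_fin, nsmul_eq_mul, mul_div_assoc',
            div_le_div_iff₀ (by positivity) (by positivity)]
          nlinarith
  have huv : ⟪u, v⟫ = 0 := by simp [v, inner_sum, real_inner_smul_right, hbu]
  obtain ⟨t, ht, hz⟩ := exists_nonneg_smul_add_mem_frontier (isBounded_closedBall.subset hKR)
    (norm_ne_zero_iff.1 (hu ▸ one_ne_zero))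
    (hrK (mem_closedBall_zero_iff.2 (hv.trans (by linarith))))
  refine ⟨t • u + v, ⟨hz, div_le_inner_of_mem_frontier hr hrK hKR hν hu huv hv ht hz⟩, ?_⟩
  funext k
  change ⟪b k, t • u + v⟫ = y k
  rw [inner_add_right, real_inner_smul_right, real_inner_comm, hbu, hb.inner_right_fintype,
    mul_zero, zero_add]

theorem hausdorffMeasure_inner_normal_pos [MeasurableSpace E] [BorelSpace E]
    [FiniteDimensional ℝ E] {N : ℕ} (hE : finrank ℝ E = N + 1) (hr : 0 < r)
    (hrK : closedBall 0 r ⊆ K) (hKR : K ⊆ closedBall 0 R)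
    (hν : ∀ z ∈ frontier K, ‖ν z‖ = 1 ∧ ∀ y ∈ K, ⟪y, ν z⟫ ≤ ⟪z, ν z⟫) (hu : ‖u‖ = 1) :
    0 < μH[N] {z | z ∈ frontier K ∧ r / (2 * R) ≤ ⟪u, ν z⟫} := by
  obtain ⟨b, hb, hbu⟩ :=
    exists_orthonormal_forall_inner_eq_zero hE (norm_ne_zero_iff.1 (hu ▸ one_ne_zero))
  have hP : LipschitzWith 1 (fun z k => ⟪b k, z⟫ : E → Fin N → ℝ) :=
    LipschitzWith.mk_one fun z z' => (dist_pi_le_iff dist_nonneg).2 fun k => by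
      rw [Real.dist_eq, ← inner_sub_right, dist_eq_norm]
      exact (abs_real_inner_le_norm _ _).trans (by rw [hb.1 k, one_mul])
  have hball : 0 < μH[N] (closedBall (0 : Fin N → ℝ) (r / (2 * (N + 1)))) := by
    have h := hausdorffMeasure_pi_real (ι := Fin N)
    rw [Fintype.card_fin] at h
    rw [h]
    exact measure_closedBall_pos volume 0 (by positivity)
  calc 0 < _ := hball
    _ ≤ _ := measure_mono (closedBall_subset_image_inner_frontier hr hrK hKR hν hb hu hbu)
    _ ≤ _ := hP.hausdorffMeasure_image_le (Nat.cast_nonneg N) _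
    _ = _ := by simp

theorem supportFun_eq_inner_mem_Icc_of_mem_frontier (hKc : IsClosed K) (hr : 0 ≤ r)
    (hrK : closedBall 0 r ⊆ K) (hKR : K ⊆ closedBall 0 R) {z n : E} (hz : z ∈ frontier K)
    (hn : ‖n‖ = 1) (hsupp : ∀ y ∈ K, ⟪y, n⟫ ≤ ⟪z, n⟫) :
    supportFun K n = ⟪z, n⟫ ∧ ⟪z, n⟫ ∈ Icc r R := by
  refine ⟨IsGreatest.csSup_eq ⟨⟨z, hKc.frontier_subset hz, rfl⟩, ?_⟩,
    le_of_closedBall_subset_of_inner_le hr hrK hn hsupp, (real_inner_le_norm z n).trans ?_⟩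
  · rintro _ ⟨y, hy, rfl⟩
    exact hsupp y hy
  · rw [hn, mul_one]
    exact mem_closedBall_zero_iff.1 (hKR (hKc.frontier_subset hz))

variable [MeasurableSpace E] [BorelSpace E]

theorem integrable_orliczIntegrand_frontier [FiniteDimensional ℝ E] {μ : Measure E}
    [IsFiniteMeasure (μ.restrict (frontier K))] (hKc : IsClosed K) (hr : 0 < r)
    (hrK : closedBall 0 r ⊆ K) (hKR : K ⊆ closedBall 0 R) (hνm : Measurable ν)
    (hν : ∀ z ∈ frontier K, ‖ν z‖ = 1 ∧ ∀ y ∈ K, ⟪y, ν z⟫ ≤ ⟪z, ν z⟫) {φ : ℝ → ℝ}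
    (hφ : Continuous φ) (x : E) {lam : ℝ} (hlam : 0 < lam) :
    Integrable (fun z => φ (⟪x, ν z⟫ / (lam * supportFun K (ν z))) * supportFun K (ν z))
      (μ.restrict (frontier K)) := by
  have hfr : MeasurableSet (frontier K) := isClosed_frontier.measurableSet
  have hsupp := fun z (hz : z ∈ frontier K) =>
    supportFun_eq_inner_mem_Icc_of_mem_frontier hKc hr.le hrK hKR hz (hν z hz).1 (hν z hz).2
  refine integrable_orliczIntegrand (B := ‖x‖) hφ (measurable_const.inner hνm).aemeasurable
    ((measurable_id.inner hνm).aemeasurable.congr ((ae_restrict_iff' hfr).2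
      (Eventually.of_forall fun z hz => (hsupp z hz).1.symm)))
    (ae_restrict_of_forall_mem hfr fun z hz => ?_)
    (ae_restrict_of_forall_mem hfr fun z hz => (hsupp z hz).1 ▸ (hsupp z hz).2) hr hlam
  exact (abs_real_inner_le_norm x (ν z)).trans (by rw [(hν z hz).1, mul_one])

theorem tendsto_orliczIntegral_frontier_nhdsGT_zero [FiniteDimensional ℝ E] {N : ℕ}
    (hE : finrank ℝ E = N + 1) [IsFiniteMeasure (μH[N].restrict (frontier K))] (hr : 0 < r)
    (hrK : closedBall 0 r ⊆ K) (hKR : K ⊆ closedBall 0 R) (hνm : Measurable ν)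
    (hν : ∀ z ∈ frontier K, ‖ν z‖ = 1 ∧ ∀ y ∈ K, ⟪y, ν z⟫ ≤ ⟪z, ν z⟫) {φ : ℝ → ℝ}
    (hφ : ConvexOn ℝ univ φ) (hφ0 : φ 0 = 0) (hφnn : ∀ t, 0 ≤ φ t)
    (hφpos : ∀ t : ℝ, t ≠ 0 → 0 < φ (-t) + φ t) {x : E} (hx : x ≠ 0)
    (hint : ∀ lam, 0 < lam → Integrable (fun z => φ (⟪x, ν z⟫ / (lam * supportFun K (ν z))) *
      supportFun K (ν z)) (μH[N].restrict (frontier K)))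
    (hhb : ∀ᵐ z ∂μH[N].restrict (frontier K), supportFun K (ν z) ∈ Icc r R) :
    Tendsto (orliczIntegral φ (μH[N].restrict (frontier K)) (fun z => ⟪x, ν z⟫)
      (fun z => supportFun K (ν z))) (𝓝[>] 0) atTop := by
  obtain ⟨σ, hσ1, hσ⟩ := exists_abs_eq_one_map_pos hφpos
  have hσ0 : σ ≠ 0 := by rintro rfl; simp at hσ1
  have hx' : 0 < ‖x‖ := norm_pos_iff.2 hx
  have hu : ‖(σ * ‖x‖)⁻¹ • x‖ = 1 := by
    rw [norm_smul, norm_inv, norm_mul, Real.norm_eq_abs, hσ1, one_mul, norm_norm,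
      inv_mul_cancel₀ hx'.ne']
  have hrR : r ≤ R := le_of_closedBall_subset_of_inner_le hr.le (hrK.trans hKR) hu fun y hy =>
    (real_inner_le_norm y _).trans (by rw [hu, mul_one]; exact mem_closedBall_zero_iff.1 hy)
  have hR : 0 < R := hr.trans_le hrR
  refine tendsto_orliczIntegral_nhdsGT_zero hφ hφ0 hφnn hint
    (measurable_const.inner hνm).aemeasurable hhb hr (δ := r / (2 * R) * ‖x‖) hσ (by positivity) ?_
  rw [Measure.restrict_apply' isClosed_frontier.measurableSet]
  refine (hausdorffMeasure_inner_normal_pos hE hr hrK hKR hν hu).trans_le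
    (measure_mono fun z ⟨hz, hzν⟩ => ⟨?_, hz⟩)
  rw [real_inner_smul_left] at hzν
  have hxz : ⟪x, ν z⟫ / σ = (σ * ‖x‖)⁻¹ * ⟪x, ν z⟫ * ‖x‖ := by field_simp
  change _ ≤ ⟪x, ν z⟫ / σ
  rw [hxz]
  exact mul_le_mul_of_nonneg_right hzν hx'.le

theorem exists_orliczIntegral_frontier_le_eq_Ici [FiniteDimensional ℝ E] {N : ℕ}
    (hE : finrank ℝ E = N + 1) (hKc : IsCompact K) (hKconv : Convex ℝ K) (hK0 : K ∈ 𝓝 0)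
    (hνm : Measurable ν) (hν : ∀ z ∈ frontier K, ‖ν z‖ = 1 ∧ ∀ y ∈ K, ⟪y, ν z⟫ ≤ ⟪z, ν z⟫)
    {φ : ℝ → ℝ} (hφ : ConvexOn ℝ univ φ) (hφ0 : φ 0 = 0) (hφnn : ∀ t, 0 ≤ φ t)
    (hφpos : ∀ t : ℝ, t ≠ 0 → 0 < φ (-t) + φ t) {x : E} (hx : x ≠ 0) {c : ℝ} (hc : 0 < c) :
    ∃ lam₀, 0 < lam₀ ∧ {lam | 0 < lam ∧ orliczIntegral φ (μH[N].restrict (frontier K))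
      (fun z => ⟪x, ν z⟫) (fun z => supportFun K (ν z)) lam ≤ c} = Ici lam₀ := by
  obtain ⟨r, hr, hrK⟩ := nhds_basis_closedBall.mem_iff.1 hK0
  obtain ⟨R, hKR⟩ := hKc.isBounded.subset_closedBall 0
  have : IsFiniteMeasure (μH[N].restrict (frontier K)) := isFiniteMeasure_restrict.2
    (hausdorffMeasure_frontier_lt_top hE hKconv hK0 hKc.isBounded).ne
  have hhb : ∀ᵐ z ∂μH[N].restrict (frontier K), supportFun K (ν z) ∈ Icc r R :=
    ae_restrict_of_forall_mem isClosed_frontier.measurableSet fun z hz =>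
      have h := supportFun_eq_inner_mem_Icc_of_mem_frontier hKc.isClosed hr.le hrK hKR hz (hν z hz).1
        (hν z hz).2
      h.1 ▸ h.2
  have hhpos := hhb.mono fun z hz => hr.trans_le hz.1
  have hint := fun lam (hlam : 0 < lam) => integrable_orliczIntegrand_frontier (μ := μH[N])
    hKc.isClosed hr hrK hKR hνm hν (continuousOn_univ.1 (hφ.continuousOn isOpen_univ)) x hlam
  refine exists_setOf_le_eq_Ici (continuousOn_orliczIntegral hφ hφ0 hφnn hint hhpos)
    (orliczIntegral_antitoneOn hφ hφ0 hφnn hint hhpos)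
    (tendsto_orliczIntegral_frontier_nhdsGT_zero hE hr hrK hKR hνm hν hφ hφ0 hφnn hφpos hx hint hhb)
    ?_
  obtain ⟨lam, hlam, hpos⟩ := (((tendsto_orliczIntegral_atTop hφ hφ0 hφnn hint hhpos).eventually
    (gt_mem_nhds hc)).and (eventually_gt_atTop 0)).exists
  exact ⟨lam, hpos, hlam.le⟩

end InnerProductSpace

-- `∫ g dS_K` is modelled as `∫_{∂K} g (ν z) dμH[n-1](z)` for a measurable choice `ν` of outer
-- unit normals.
theorem stmt_12_general (n : ℕ) (K : Set (EuclideanSpace ℝ (Fin n)))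
    (hKcomp : IsCompact K) (hKconv : Convex ℝ K)
    (h0 : (0 : EuclideanSpace ℝ (Fin n)) ∈ interior K)
    (φ : ℝ → ℝ) (hφconv : ConvexOn ℝ Set.univ φ)
    (hφnonneg : ∀ t, 0 ≤ φ t) (hφ0 : φ 0 = 0)
    (hφpos : ∀ t : ℝ, t ≠ 0 → 0 < φ (-t) + φ t)
    (ν : EuclideanSpace ℝ (Fin n) → EuclideanSpace ℝ (Fin n))
    (hνmeas : Measurable ν)
    (hν : ∀ z ∈ frontier K, ‖ν z‖ = 1 ∧ ∀ y ∈ K, ⟪y, ν z⟫ ≤ ⟪z, ν z⟫)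
    (x : EuclideanSpace ℝ (Fin n)) (hx : x ≠ 0) :
    ∃ lam₀ : ℝ, 0 < lam₀ ∧
      {lam : ℝ | 0 < lam ∧
        (∫ z in frontier K,
            φ (⟪x, ν z⟫ / (lam * sSup ((fun y => ⟪y, ν z⟫) '' K))) *
              sSup ((fun y => ⟪y, ν z⟫) '' K) ∂(μH[(n : ℝ) - 1]))
          ≤ n * (volume K).toReal} = Set.Ici lam₀ := by
  obtain ⟨m, rfl⟩ : ∃ m, n = m + 1 :=
    Nat.exists_eq_succ_of_ne_zero fun hn => hx (by subst hn; exact Subsingleton.elim _ _)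
  rw [show ((m + 1 : ℕ) : ℝ) - 1 = m by push_cast; ring]
  have hV : 0 < (volume K).toReal := ENNReal.toReal_pos
    (volume.measure_pos_of_nonempty_interior ⟨0, h0⟩).ne' hKcomp.measure_lt_top.ne
  exact exists_orliczIntegral_frontier_le_eq_Ici finrank_euclideanSpace_fin hKcomp hKconv
    (mem_interior_iff_mem_nhds.1 h0) hνmeas hν hφconv hφ0 hφnonneg hφpos hx (by positivity)

/-- For `φ ∈ 𝒞` and a convex body `K` with `0 ∈ int K`, the set
`{λ > 0 : ∫_{S^{n-1}} φ((x·w)/(λ h_K(w))) h_K(w) dS_K(w) ≤ nV(K)}` is a closed half-line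
`[λ₀, ∞)` with `λ₀ > 0`; the surface-area-measure integral is expressed as a boundary
integral via a selection `ν` of exterior unit normals. -/
theorem stmt_12 (n : ℕ) (hn : 2 ≤ n) (K : Set (EuclideanSpace ℝ (Fin n)))
    (hKcomp : IsCompact K) (hKconv : Convex ℝ K)
    (h0 : (0 : EuclideanSpace ℝ (Fin n)) ∈ interior K)
    (φ : ℝ → ℝ) (hφconv : ConvexOn ℝ Set.univ φ)
    (hφnonneg : ∀ t, 0 ≤ φ t) (hφ0 : φ 0 = 0)
    (hφpos : ∀ t : ℝ, t ≠ 0 → 0 < φ (-t) + φ t)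
    (ν : EuclideanSpace ℝ (Fin n) → EuclideanSpace ℝ (Fin n))
    (hνmeas : Measurable ν)
    (hν : ∀ z ∈ frontier K, ‖ν z‖ = 1 ∧ ∀ y ∈ K, ⟪y, ν z⟫ ≤ ⟪z, ν z⟫)
    (x : EuclideanSpace ℝ (Fin n)) (hx : x ≠ 0) :
    ∃ lam₀ : ℝ, 0 < lam₀ ∧
      {lam : ℝ | 0 < lam ∧
        (∫ z in frontier K,
            φ (⟪x, ν z⟫ / (lam * sSup ((fun y => ⟪y, ν z⟫) '' K))) *
              sSup ((fun y => ⟪y, ν z⟫) '' K) ∂(μH[(n : ℝ) - 1]))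
          ≤ n * (volume K).toReal} = Set.Ici lam₀ :=
  stmt_12_general n K hKcomp hKconv h0 φ hφconv hφnonneg hφ0 hφpos ν hνmeas hν x hx
end

section
/- Let K be a convex body in ℝⁿ spinning around u (o-symmetric, u ∈ ∂K, axis of rotation ℝu, K ∩ u^⊥ = Bⁿ ∩ u^⊥). If t ∈ (0, 1/3), v ∈ S^{n-1} ∩ u^⊥, w ∈ u^⊥ ∩ S^{n-1}, and τ√t·u + (1−t)v ∈ K for some τ > 0, then τ√t·u + (1−2t)v + √t·w ∈ K. -/
/-!
Reflecting in the hyperplane orthogonal to `x - y` fixes the axis `ℝu` whenever `x, y ⊥ u`,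
and swaps `x` and `y` when `‖x‖ = ‖y‖`; so the slice of `K` at height `a` along `u` contains,
together with `a • u + x`, every `a • u + y` with `y ⊥ u` and `‖y‖ = ‖x‖`. A vector `m ⊥ u` with
`‖m‖ ≤ ‖x‖` is the midpoint of two such vectors `m ± c • p` (`p ⊥ u, m`), so convexity puts
`a • u + m` in `K`. For `m = (1 - 2t) v + √t w` and `x = (1 - t) v` the condition `‖m‖ ≤ ‖x‖` reads
`(1 - 2t)² + t ≤ (1 - t)²`, i.e. `t ≤ 1/3`.
-/

open RealInnerProductSpace

section

variable {E : Type*} [NormedAddCommGroup E] [InnerProductSpace ℝ E]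

theorem norm_smul_add_smul_sq_of_orthonormal {v w : E} (hv : ‖v‖ = 1) (hw : ‖w‖ = 1)
    (hvw : ⟪v, w⟫ = 0) (a b : ℝ) : ‖a • v + b • w‖ ^ 2 = a ^ 2 + b ^ 2 := by
  rw [norm_add_sq_real, norm_smul, norm_smul, real_inner_smul_left, real_inner_smul_right, hvw,
    hv, hw, Real.norm_eq_abs, Real.norm_eq_abs]
  simp only [mul_one, mul_zero, sq_abs, add_zero]

theorem exists_norm_add_smul_eq_and_norm_sub_smul_eq {m p : E} {r : ℝ} (hm : ‖m‖ ≤ r)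
    (hp : p ≠ 0) (hmp : ⟪m, p⟫ = 0) : ∃ c : ℝ, ‖m + c • p‖ = r ∧ ‖m - c • p‖ = r := by
  have hr : 0 ≤ r := (norm_nonneg m).trans hm
  have hp' : 0 < ‖p‖ := norm_pos_iff.2 hp
  set c := √(r ^ 2 - ‖m‖ ^ 2) / ‖p‖
  have hc : ‖m‖ ^ 2 + (c * ‖p‖) ^ 2 = r ^ 2 := by
    rw [div_mul_cancel₀ _ hp'.ne', Real.sq_sqrt (by nlinarith [norm_nonneg m])]
    ring
  refine ⟨c, (sq_eq_sq₀ (norm_nonneg _) hr).1 ?_, (sq_eq_sq₀ (norm_nonneg _) hr).1 ?_⟩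
  · rw [norm_add_sq_real, real_inner_smul_right, hmp, norm_smul, Real.norm_eq_abs, ← hc,
      mul_pow, mul_pow, sq_abs]
    ring
  · rw [norm_sub_sq_real, real_inner_smul_right, hmp, norm_smul, Real.norm_eq_abs, ← hc,
      mul_pow, mul_pow, sq_abs]
    ring

variable {K : Set E} {u : E} (hK : ∀ f : E ≃ₗᵢ[ℝ] E, f u = u → f '' K = K)
include hK

theorem smul_add_mem_of_norm_eq {x y : E} (hxy : ‖x‖ = ‖y‖) (hux : ⟪u, x⟫ = 0)
    (huy : ⟪u, y⟫ = 0) {a : ℝ} (h : a • u + x ∈ K) : a • u + y ∈ K := by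
  set R := Submodule.reflection (ℝ ∙ (x - y))ᗮ
  have hRu : R u = u := Submodule.reflection_mem_subspace_eq_self
    (Submodule.mem_orthogonal_singleton_iff_inner_right.2 (by rw [inner_sub_left,
      real_inner_comm, hux, real_inner_comm, huy, sub_zero]))
  rw [← hK R hRu]
  exact ⟨_, h, by rw [map_add, map_smul, hRu, Submodule.reflection_sub hxy]⟩

theorem smul_add_mem_of_norm_le (hKconv : Convex ℝ K) {x m p : E} (hm : ‖m‖ ≤ ‖x‖)
    (hux : ⟪u, x⟫ = 0) (hum : ⟪u, m⟫ = 0) (hp : p ≠ 0) (hup : ⟪u, p⟫ = 0) (hmp : ⟪m, p⟫ = 0)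
    {a : ℝ} (h : a • u + x ∈ K) : a • u + m ∈ K := by
  obtain ⟨c, hplus, hminus⟩ := exists_norm_add_smul_eq_and_norm_sub_smul_eq hm hp hmp
  have hu_smul : ∀ s : ℝ, ⟪u, m + s • p⟫ = 0 := fun s => by
    rw [inner_add_right, real_inner_smul_right, hum, hup, mul_zero, add_zero]
  have h₁ := smul_add_mem_of_norm_eq hK hplus.symm hux (hu_smul c) h
  have h₂ := smul_add_mem_of_norm_eq hK hminus.symm hux (by rw [sub_eq_add_neg, ← neg_smul]; exact hu_smul (-c)) h
  convert hKconv h₁ h₂ (by norm_num : (0 : ℝ) ≤ 1 / 2) (by norm_num : (0 : ℝ) ≤ 1 / 2)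
    (by norm_num) using 1
  module

end

theorem stmt_19_general (n : ℕ) (u v w : EuclideanSpace ℝ (Fin n))
    (hv : ‖v‖ = 1) (hw : ‖w‖ = 1)
    (huv : ⟪u, v⟫ = 0) (huw : ⟪u, w⟫ = 0) (hvw : ⟪v, w⟫ = 0)
    (K : Set (EuclideanSpace ℝ (Fin n))) (hKconv : Convex ℝ K)
    (hKrot : ∀ f : EuclideanSpace ℝ (Fin n) ≃ₗᵢ[ℝ] EuclideanSpace ℝ (Fin n),
      f u = u → f '' K = K)
    (t τ : ℝ) (ht : t ∈ Set.Ioo (0 : ℝ) (1 / 3))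
    (hmem : (τ * Real.sqrt t) • u + (1 - t) • v ∈ K) :
    (τ * Real.sqrt t) • u + (1 - 2 * t) • v + Real.sqrt t • w ∈ K := by
  obtain ⟨ht0, ht3⟩ := ht
  have hst : √t ^ 2 = t := Real.sq_sqrt ht0.le
  have hnorm := norm_smul_add_smul_sq_of_orthonormal hv hw hvw
  have hu_perp : ∀ a b : ℝ, ⟪u, a • v + b • w⟫ = 0 := fun a b => by
    rw [inner_add_right, real_inner_smul_right, real_inner_smul_right, huv, huw]
    ring
  have hm : ‖(1 - 2 * t) • v + √t • w‖ ≤ ‖(1 - t) • v‖ := by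
    rw [← sq_le_sq₀ (norm_nonneg _) (norm_nonneg _), hnorm, norm_smul, hv, mul_one,
      Real.norm_eq_abs, sq_abs, hst]
    nlinarith
  -- `(1 - 2t) v + √t w` turned by a right angle in the plane of `v` and `w`
  have hp : √t • v + (-(1 - 2 * t)) • w ≠ 0 := by
    intro hp0
    have h0 := hnorm √t (-(1 - 2 * t))
    rw [hp0, norm_zero] at h0
    nlinarith
  have hmp : ⟪(1 - 2 * t) • v + √t • w, √t • v + (-(1 - 2 * t)) • w⟫ = 0 := by
    simp only [inner_add_left, inner_add_right, real_inner_smul_left, real_inner_smul_right,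
      real_inner_self_eq_norm_sq, hv, hw, hvw, real_inner_comm v w]
    ring
  simpa only [add_assoc] using smul_add_mem_of_norm_le hKrot hKconv hm
    (by rw [real_inner_smul_right, huv, mul_zero]) (hu_perp _ _) hp (hu_perp _ _) hmp hmem

theorem stmt_19 (n : ℕ) (u v w : EuclideanSpace ℝ (Fin n))
    (hu : ‖u‖ = 1) (hv : ‖v‖ = 1) (hw : ‖w‖ = 1)
    (huv : ⟪u, v⟫ = 0) (huw : ⟪u, w⟫ = 0) (hvw : ⟪v, w⟫ = 0)
    (K : Set (EuclideanSpace ℝ (Fin n))) (hKcomp : IsCompact K) (hKconv : Convex ℝ K)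
    (hKint : (interior K).Nonempty)
    (hKsymm : ∀ x ∈ K, -x ∈ K)
    (huK : u ∈ frontier K)
    (hKrot : ∀ f : EuclideanSpace ℝ (Fin n) ≃ₗᵢ[ℝ] EuclideanSpace ℝ (Fin n),
      f u = u → f '' K = K)
    (hKeq : {x ∈ K | ⟪x, u⟫ = 0} = {x ∈ Metric.closedBall 0 1 | ⟪x, u⟫ = 0})
    (t τ : ℝ) (ht : t ∈ Set.Ioo (0 : ℝ) (1 / 3)) (hτ : 0 < τ)
    (hmem : (τ * Real.sqrt t) • u + (1 - t) • v ∈ K) :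
    (τ * Real.sqrt t) • u + (1 - 2 * t) • v + Real.sqrt t • w ∈ K :=
  stmt_19_general n u v w hv hw huv huw hvw K hKconv hKrot t τ ht hmem
end
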